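/- arXiv:2111.02181 — 7 statements merged into one kernel-verified Lean document; each statement's English description precedes it below -/
import Mathlib

section
/- There exists exactly one family of formal power series f_N, g_N (N ≥ 0) and f_Q in ℝ[[z]] satisfying the two-step Knödel–Böhm–Hornik system together with the support condition. -/
/-!
Every equation of the system has the form `series = constant + z * (linear combination)`, so
comparing coefficients of `z ^ (m + 1)` expresses the `(m + 1)`-st coefficients of all series
through the `m`-th ones: the coefficient vectors are the iterates `L ^ m e₀` of the one-step
transition operator `L` of the walk, applied to the initial state `e₀` concentrated at `f_0`.
This both defines the solution and forces it. As `L` moves mass by at most one level, `L ^ m e₀`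
vanishes above level `m`, which is the support condition.
-/

open PowerSeries

namespace KnoedelBoehmHornik

variable {R M : Type*} [CommSemiring R]

/-- The components are `(f_N)_N`, `(g_N)_N` and `f_Q`. -/
abbrev State (M : Type*) := (ℕ → M) × (ℕ → M) × M

/-- The right-hand side of the system with the factor `z` and the constant term removed. -/
def transition [AddCommMonoid M] [Module R M] (α β : R) (s : State M) : State M :=
  (fun N => match N with
    | 0 => (α * β) • s.1 1 + (α ^ 2 + β ^ 2) • s.1 0 + (α * β) • s.2.2
    | 1 => (α * β) • s.1 0 + (α * β) • s.1 2 + (α ^ 2 + β ^ 2) • s.1 1 + β ^ 2 • s.2.2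
    | N + 2 =>
      (α * β) • s.1 (N + 1) + (α * β) • s.1 (N + 3) + (α ^ 2 + β ^ 2) • s.1 (N + 2),
   fun N => match N with
    | 0 =>
      (α * β) • s.1 0 + (α * β) • s.2.1 1 + (α * β) • s.2.2 + (α ^ 2 + β ^ 2) • s.2.1 0
    | N + 1 =>
      (α * β) • s.2.1 N + (α * β) • s.2.1 (N + 2) + (α ^ 2 + β ^ 2) • s.2.1 (N + 1),
   (α * β) • s.2.1 0 + α ^ 2 • s.2.2)

def initial [Zero M] [One M] : State M := (Pi.single 0 1, 0, 0)

noncomputable def coeffs (m : ℕ) (p : State R⟦X⟧) : State R :=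
  (fun N => coeff m (p.1 N), fun N => coeff m (p.2.1 N), coeff m p.2.2)

noncomputable def ofCoeffs (s : ℕ → State R) : State R⟦X⟧ :=
  (fun N => mk fun m => (s m).1 N, fun N => mk fun m => (s m).2.1 N, mk fun m => (s m).2.2)

theorem coeffs_ofCoeffs (s : ℕ → State R) (m : ℕ) : coeffs m (ofCoeffs s) = s m := by
  simp [coeffs, ofCoeffs]

theorem ext_coeffs {p q : State R⟦X⟧} (h : ∀ m, coeffs m p = coeffs m q) : p = q := by
  simp only [coeffs, Prod.ext_iff, funext_iff] at h
  exact Prod.ext (funext fun N => ext fun m => (h m).1 N)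
    (Prod.ext (funext fun N => ext fun m => (h m).2.1 N) (ext fun m => (h m).2.2))

theorem coeffs_initial_add_X_smul_zero (q : State R⟦X⟧) :
    coeffs 0 (initial + (X : R⟦X⟧) • q) = initial := by
  ext (_ | N) <;> simp [coeffs, initial]

theorem coeffs_initial_add_X_smul_succ (m : ℕ) (q : State R⟦X⟧) :
    coeffs (m + 1) (initial + (X : R⟦X⟧) • q) = coeffs m q := by
  ext (_ | N) <;> simp [coeffs, initial, coeff_succ_X_mul]

theorem coeffs_transition (α β : R) (m : ℕ) (p : State R⟦X⟧) :
    coeffs m (transition α β p) = transition α β (coeffs m p) := by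
  ext (_ | _ | N) <;> simp [coeffs, transition]

theorem transition_support [AddCommMonoid M] [Module R M] (α β : R) {s : State M} {k : ℕ}
    (hs : ∀ N, k < N → s.1 N = 0 ∧ s.2.1 N = 0) {N : ℕ} (hN : k + 1 < N) :
    (transition α β s).1 N = 0 ∧ (transition α β s).2.1 N = 0 := by
  obtain ⟨N, rfl⟩ : ∃ n, N = n + 2 := ⟨N - 2, by omega⟩
  simp [transition, hs (N + 1) (by omega), hs (N + 2) (by omega), hs (N + 3) (by omega)]

theorem transition_iterate_initial_support [AddCommMonoid M] [One M] [Module R M] (α β : R)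
    {m N : ℕ} (h : m < N) :
    ((transition α β)^[m] (initial : State M)).1 N = 0 ∧
      ((transition α β)^[m] (initial : State M)).2.1 N = 0 := by
  induction m generalizing N with
  | zero =>
    obtain ⟨N, rfl⟩ : ∃ n, N = n + 1 := ⟨N - 1, by omega⟩
    simp [initial]
  | succ m ih =>
    rw [Function.iterate_succ_apply']
    exact transition_support α β (fun _ hN => ih hN) h

theorem eq_initial_add_X_smul_transition_iff (α β : R) (p : State R⟦X⟧) :
    p = initial + (X : R⟦X⟧) • transition α β p ↔
      ∀ m, coeffs m p = (transition α β)^[m] initial := by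
  constructor
  · intro hp m
    induction m with
    | zero => rw [hp, coeffs_initial_add_X_smul_zero]; rfl
    | succ m ih =>
      rw [hp, coeffs_initial_add_X_smul_succ, coeffs_transition, ih, Function.iterate_succ_apply']
  · intro h
    refine ext_coeffs fun m => ?_
    cases m with
    | zero => rw [h, coeffs_initial_add_X_smul_zero]; rfl
    | succ m =>
      rw [h, coeffs_initial_add_X_smul_succ, coeffs_transition, h, Function.iterate_succ_apply']

theorem existsUnique_eq_initial_add_X_smul_transition (α β : R) :
    ∃! p : State R⟦X⟧, p = initial + (X : R⟦X⟧) • transition α β p := by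
  simp only [eq_initial_add_X_smul_transition_iff]
  exact ⟨ofCoeffs fun m => (transition α β)^[m] initial, coeffs_ofCoeffs _,
    fun q hq => ext_coeffs fun m => by rw [hq, coeffs_ofCoeffs]⟩

theorem eq_initial_add_X_smul_transition_iff_system (α β : R) (p : State R⟦X⟧) :
    p = initial + (X : R⟦X⟧) • transition α β p ↔
      (∀ N : ℕ, p.1 (N + 2) =
        C (α * β) * X * p.1 (N + 1) + C (α * β) * X * p.1 (N + 3)
          + C (α ^ 2 + β ^ 2) * X * p.1 (N + 2)) ∧
      (p.1 1 = C (α * β) * X * p.1 0 + C (α * β) * X * p.1 2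
          + C (α ^ 2 + β ^ 2) * X * p.1 1 + C (β ^ 2) * X * p.2.2) ∧
      (p.1 0 = 1 + C (α * β) * X * p.1 1 + C (α ^ 2 + β ^ 2) * X * p.1 0
          + C (α * β) * X * p.2.2) ∧
      (p.2.2 = C (α * β) * X * p.2.1 0 + C (α ^ 2) * X * p.2.2) ∧
      (∀ N : ℕ, p.2.1 (N + 1) = C (α * β) * X * p.2.1 N
          + C (α * β) * X * p.2.1 (N + 2) + C (α ^ 2 + β ^ 2) * X * p.2.1 (N + 1)) ∧
      (p.2.1 0 = C (α * β) * X * p.1 0 + C (α * β) * X * p.2.1 1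
          + C (α * β) * X * p.2.2 + C (α ^ 2 + β ^ 2) * X * p.2.1 0) := by
  set q := initial + (X : R⟦X⟧) • transition α β p
  obtain ⟨h1, h2, h3, h4, h5, h6⟩ :
      (∀ N : ℕ, q.1 (N + 2) = C (α * β) * X * p.1 (N + 1) + C (α * β) * X * p.1 (N + 3)
        + C (α ^ 2 + β ^ 2) * X * p.1 (N + 2)) ∧
      (q.1 1 = C (α * β) * X * p.1 0 + C (α * β) * X * p.1 2
        + C (α ^ 2 + β ^ 2) * X * p.1 1 + C (β ^ 2) * X * p.2.2) ∧
      (q.1 0 = 1 + C (α * β) * X * p.1 1 + C (α ^ 2 + β ^ 2) * X * p.1 0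
        + C (α * β) * X * p.2.2) ∧
      (q.2.2 = C (α * β) * X * p.2.1 0 + C (α ^ 2) * X * p.2.2) ∧
      (∀ N : ℕ, q.2.1 (N + 1) = C (α * β) * X * p.2.1 N
        + C (α * β) * X * p.2.1 (N + 2) + C (α ^ 2 + β ^ 2) * X * p.2.1 (N + 1)) ∧
      (q.2.1 0 = C (α * β) * X * p.1 0 + C (α * β) * X * p.2.1 1
        + C (α * β) * X * p.2.2 + C (α ^ 2 + β ^ 2) * X * p.2.1 0) := by
    refine ⟨fun N => ?_, ?_, ?_, ?_, fun N => ?_, ?_⟩ <;>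
      simp only [q, initial, transition, Prod.smul_mk, Prod.mk_add_mk, Pi.add_apply,
        Pi.smul_apply, Pi.single_apply, smul_eq_mul, smul_eq_C_mul, map_mul, map_add, map_pow,
        Nat.add_eq_zero_iff, one_ne_zero, OfNat.ofNat_ne_zero, and_false, ↓reduceIte,
        zero_add] <;>
      ring
  rw [← h2, ← h3, ← h4, ← h6]
  simp only [← h1, ← h5]
  constructor
  · intro hp
    simp [← hp]
  · rintro ⟨e1, e2, e3, e4, e5, e6⟩
    refine Prod.ext (funext fun N => ?_) (Prod.ext (funext fun N => ?_) e4)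
    · rcases N with _ | _ | N
      exacts [e3, e2, e1 N]
    · rcases N with _ | N
      exacts [e6, e5 N]

theorem support_of_eq_initial_add_X_smul_transition {α β : R} {p : State R⟦X⟧}
    (hp : p = initial + (X : R⟦X⟧) • transition α β p) (m N : ℕ) (h : m < N) :
    coeff m (p.1 N) = 0 ∧ coeff m (p.2.1 N) = 0 := by
  have hm : coeffs m p = _ := (eq_initial_add_X_smul_transition_iff α β p).mp hp m
  change (coeffs m p).1 N = 0 ∧ (coeffs m p).2.1 N = 0
  exact hm ▸ transition_iterate_initial_support α β h

end KnoedelBoehmHornik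

open KnoedelBoehmHornik

theorem twoStep_system_existsUnique_general (α β : ℝ) :
    ∃! p : (ℕ → PowerSeries ℝ) × (ℕ → PowerSeries ℝ) × PowerSeries ℝ,
      (∀ N : ℕ, p.1 (N + 2) =
        C (α * β) * X * p.1 (N + 1) + C (α * β) * X * p.1 (N + 3)
          + C (α ^ 2 + β ^ 2) * X * p.1 (N + 2)) ∧
      (p.1 1 = C (α * β) * X * p.1 0 + C (α * β) * X * p.1 2
          + C (α ^ 2 + β ^ 2) * X * p.1 1 + C (β ^ 2) * X * p.2.2) ∧
      (p.1 0 = 1 + C (α * β) * X * p.1 1 + C (α ^ 2 + β ^ 2) * X * p.1 0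
          + C (α * β) * X * p.2.2) ∧
      (p.2.2 = C (α * β) * X * p.2.1 0 + C (α ^ 2) * X * p.2.2) ∧
      (∀ N : ℕ, p.2.1 (N + 1) = C (α * β) * X * p.2.1 N
          + C (α * β) * X * p.2.1 (N + 2) + C (α ^ 2 + β ^ 2) * X * p.2.1 (N + 1)) ∧
      (p.2.1 0 = C (α * β) * X * p.1 0 + C (α * β) * X * p.2.1 1
          + C (α * β) * X * p.2.2 + C (α ^ 2 + β ^ 2) * X * p.2.1 0) ∧
      (∀ m N : ℕ, m < N → coeff m (p.1 N) = 0 ∧ coeff m (p.2.1 N) = 0) := by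
  refine (existsUnique_congr fun p => ?_).mpr
    (existsUnique_eq_initial_add_X_smul_transition α β)
  constructor
  · rintro ⟨h1, h2, h3, h4, h5, h6, -⟩
    exact (eq_initial_add_X_smul_transition_iff_system α β p).mpr ⟨h1, h2, h3, h4, h5, h6⟩
  · intro hp
    obtain ⟨h1, h2, h3, h4, h5, h6⟩ := (eq_initial_add_X_smul_transition_iff_system α β p).mp hp
    exact ⟨h1, h2, h3, h4, h5, h6, support_of_eq_initial_add_X_smul_transition hp⟩

/-- Existence and uniqueness of the solution of the two-step Knödel–Böhm–Hornik system
together with the support condition. -/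
theorem twoStep_system_existsUnique (α β : ℝ) (hα0 : 0 < α) (hα1 : α < 1) (hβ : β = 1 - α) :
    ∃! p : (ℕ → PowerSeries ℝ) × (ℕ → PowerSeries ℝ) × PowerSeries ℝ,
      (∀ N : ℕ, p.1 (N + 2) =
        C (α * β) * X * p.1 (N + 1) + C (α * β) * X * p.1 (N + 3)
          + C (α ^ 2 + β ^ 2) * X * p.1 (N + 2)) ∧
      (p.1 1 = C (α * β) * X * p.1 0 + C (α * β) * X * p.1 2
          + C (α ^ 2 + β ^ 2) * X * p.1 1 + C (β ^ 2) * X * p.2.2) ∧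
      (p.1 0 = 1 + C (α * β) * X * p.1 1 + C (α ^ 2 + β ^ 2) * X * p.1 0
          + C (α * β) * X * p.2.2) ∧
      (p.2.2 = C (α * β) * X * p.2.1 0 + C (α ^ 2) * X * p.2.2) ∧
      (∀ N : ℕ, p.2.1 (N + 1) = C (α * β) * X * p.2.1 N
          + C (α * β) * X * p.2.1 (N + 2) + C (α ^ 2 + β ^ 2) * X * p.2.1 (N + 1)) ∧
      (p.2.1 0 = C (α * β) * X * p.1 0 + C (α * β) * X * p.2.1 1
          + C (α * β) * X * p.2.2 + C (α ^ 2 + β ^ 2) * X * p.2.1 0) ∧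
      (∀ m N : ℕ, m < N → coeff m (p.1 N) = 0 ∧ coeff m (p.2.1 N) = 0) :=
  twoStep_system_existsUnique_general α β
end

section
/- With D(u,z) = u − 2uzα² − zαβu² + z²α³βu² − zαβ + z²α³β + z²uα⁴ − zuβ² + z²uβ²α², the bivariate series F(u,z) = Σ_{N≥0} u^N·f_N and G(u,z) = Σ_{N≥0} u^N·g_N satisfy, in ℝ[[u,z]]: D·F = −uzα² + uz²α²β²·g_0 − zαβ·f_0 + z²α³β·f_0 + u + u²z²αβ³·g_0, and D·G = −zαβ·(−uzαβ·g_0 + g_0 − zα²·g_0 + uzα²·f_0 − u·f_0). -/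
open PowerSeries Filter

noncomputable section

/-- The variable `u`, viewing `ℝ[[u,z]]` as `(ℝ[[z]])[[u]]`. -/
def U : PowerSeries (PowerSeries ℝ) := PowerSeries.X

/-- The variable `z`, viewing `ℝ[[u,z]]` as `(ℝ[[z]])[[u]]`. -/
def Zv : PowerSeries (PowerSeries ℝ) := PowerSeries.C PowerSeries.X

/-- Real constants inside `ℝ[[u,z]]`. -/
def CC (r : ℝ) : PowerSeries (PowerSeries ℝ) := PowerSeries.C (PowerSeries.C r)

/-- The embedding of `ℝ[[z]]` into `ℝ[[u,z]]` as series constant in `u`. -/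
def CP (h : PowerSeries ℝ) : PowerSeries (PowerSeries ℝ) := PowerSeries.C h

/-!
Eliminating `f_Q = zαβ·g₀ / (1 − zα²)` turns the system into three-term recurrences
`c₀·a_{N+1} + c₁·a_N + c₀·a_{N−1} = 0` (after multiplying through by `1 − zα²`), with
boundary corrections only at `N = 0, 1`. Hence multiplying the generating function by the
quadratic `c₀ + c₁u + c₀u²` leaves a polynomial of degree two in `u`, whose coefficients are
read off from the boundary equations. That quadratic is the kernel `D`, which factors as
`(1 − zα²)·(u − z(α² + β²)u − zαβ(1 + u²))`.
-/

theorem PowerSeries.quadratic_mul_mk_of_recurrence {R : Type*} [CommSemiring R]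
    (c₀ c₁ c₂ s₀ s₁ s₂ : R) (a : ℕ → R)
    (h₀ : c₀ * a 0 = s₀)
    (h₁ : c₀ * a 1 + c₁ * a 0 = s₁)
    (h₂ : c₀ * a 2 + c₁ * a 1 + c₂ * a 0 = s₂)
    (h : ∀ n, c₀ * a (n + 3) + c₁ * a (n + 2) + c₂ * a (n + 1) = 0) :
    (C c₀ + C c₁ * X + C c₂ * X ^ 2) * mk a = C s₀ + C s₁ * X + C s₂ * X ^ 2 := by
  ext n
  rcases n with _ | _ | _ | n <;>
    simp [add_mul, mul_assoc, coeff_X_pow, coeff_C, coeff_C_mul, coeff_X_pow_mul', mul_comm X, *]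

theorem twoStep_kernel_eq (α β : ℝ) :
    U - 2 * U * Zv * CC (α ^ 2) - Zv * CC (α * β) * U ^ 2 + Zv ^ 2 * CC (α ^ 3 * β) * U ^ 2
        - Zv * CC (α * β) + Zv ^ 2 * CC (α ^ 3 * β) + Zv ^ 2 * U * CC (α ^ 4)
        - Zv * U * CC (β ^ 2) + Zv ^ 2 * U * CC (β ^ 2 * α ^ 2) =
      C (-(C α * C β * X) * (1 - C α ^ 2 * X))
        + C ((1 - C α ^ 2 * X) * (1 - (C α ^ 2 + C β ^ 2) * X)) * X
        + C (-(C α * C β * X) * (1 - C α ^ 2 * X)) * X ^ 2 := by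
  simp only [U, Zv, CC, map_mul, map_pow, map_add, map_sub, map_neg, map_one]
  ring

theorem twoStep_solved_forms_general
    (α β : ℝ)
    (f g : ℕ → PowerSeries ℝ) (fQ : PowerSeries ℝ)
    (hf : ∀ N : ℕ, f (N + 2) =
      C (α * β) * X * f (N + 1) + C (α * β) * X * f (N + 3)
        + C (α ^ 2 + β ^ 2) * X * f (N + 2))
    (hf1 : f 1 = C (α * β) * X * f 0 + C (α * β) * X * f 2
        + C (α ^ 2 + β ^ 2) * X * f 1 + C (β ^ 2) * X * fQ)
    (hf0 : f 0 = 1 + C (α * β) * X * f 1 + C (α ^ 2 + β ^ 2) * X * f 0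
        + C (α * β) * X * fQ)
    (hfQ : fQ = C (α * β) * X * g 0 + C (α ^ 2) * X * fQ)
    (hg : ∀ N : ℕ, g (N + 1) = C (α * β) * X * g N + C (α * β) * X * g (N + 2)
        + C (α ^ 2 + β ^ 2) * X * g (N + 1))
    (hg0 : g 0 = C (α * β) * X * f 0 + C (α * β) * X * g 1
        + C (α * β) * X * fQ + C (α ^ 2 + β ^ 2) * X * g 0) :
    (U - 2 * U * Zv * CC (α ^ 2) - Zv * CC (α * β) * U ^ 2 + Zv ^ 2 * CC (α ^ 3 * β) * U ^ 2
        - Zv * CC (α * β) + Zv ^ 2 * CC (α ^ 3 * β) + Zv ^ 2 * U * CC (α ^ 4)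
        - Zv * U * CC (β ^ 2) + Zv ^ 2 * U * CC (β ^ 2 * α ^ 2)) * PowerSeries.mk f =
      -(U * Zv * CC (α ^ 2)) + U * Zv ^ 2 * CC (α ^ 2 * β ^ 2) * CP (g 0)
        - Zv * CC (α * β) * CP (f 0) + Zv ^ 2 * CC (α ^ 3 * β) * CP (f 0)
        + U + U ^ 2 * Zv ^ 2 * CC (α * β ^ 3) * CP (g 0) ∧
    (U - 2 * U * Zv * CC (α ^ 2) - Zv * CC (α * β) * U ^ 2 + Zv ^ 2 * CC (α ^ 3 * β) * U ^ 2
        - Zv * CC (α * β) + Zv ^ 2 * CC (α ^ 3 * β) + Zv ^ 2 * U * CC (α ^ 4)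
        - Zv * U * CC (β ^ 2) + Zv ^ 2 * U * CC (β ^ 2 * α ^ 2)) * PowerSeries.mk g =
      -(Zv * CC (α * β)) * (-(U * Zv * CC (α * β)) * CP (g 0) + CP (g 0)
        - Zv * CC (α ^ 2) * CP (g 0) + U * Zv * CC (α ^ 2) * CP (f 0) - U * CP (f 0)) := by
  simp only [map_mul, map_pow, map_add] at hf hf1 hf0 hfQ hg hg0
  rw [twoStep_kernel_eq]
  constructor
  · rw [quadratic_mul_mk_of_recurrence _ _ _ _
      (1 - C α ^ 2 * X + C α ^ 2 * C β ^ 2 * X ^ 2 * g 0) (C α * C β ^ 3 * X ^ 2 * g 0) f rfl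
      (by linear_combination (1 - C α ^ 2 * X) * hf0 + C α * C β * X * hfQ)
      (by linear_combination (1 - C α ^ 2 * X) * hf1 + C β ^ 2 * X * hfQ)
      (fun n => by linear_combination (1 - C α ^ 2 * X) * hf n)]
    simp only [U, Zv, CC, CP, map_mul, map_pow, map_add, map_sub, map_neg, map_one]
    ring
  · rw [quadratic_mul_mk_of_recurrence _ _ _ _
      (C α * C β * X * (1 - C α ^ 2 * X) * f 0 + C α ^ 2 * C β ^ 2 * X ^ 2 * g 0) 0 g rfl
      (by linear_combination (1 - C α ^ 2 * X) * hg0 + C α * C β * X * hfQ)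
      (by linear_combination (1 - C α ^ 2 * X) * hg 0)
      (fun n => by linear_combination (1 - C α ^ 2 * X) * hg (n + 1))]
    simp only [U, Zv, CC, CP, map_mul, map_pow, map_add, map_sub, map_neg, map_one, map_zero]
    ring

/-- The solved (still implicit) forms `D·F` and `D·G` of the two-step bivariate
generating functions, with the kernel `D`. -/
theorem twoStep_solved_forms
    (α β : ℝ) (hα0 : 0 < α) (hα1 : α < 1) (hβ : β = 1 - α)
    (f g : ℕ → PowerSeries ℝ) (fQ : PowerSeries ℝ)
    (hf : ∀ N : ℕ, f (N + 2) =
      C (α * β) * X * f (N + 1) + C (α * β) * X * f (N + 3)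
        + C (α ^ 2 + β ^ 2) * X * f (N + 2))
    (hf1 : f 1 = C (α * β) * X * f 0 + C (α * β) * X * f 2
        + C (α ^ 2 + β ^ 2) * X * f 1 + C (β ^ 2) * X * fQ)
    (hf0 : f 0 = 1 + C (α * β) * X * f 1 + C (α ^ 2 + β ^ 2) * X * f 0
        + C (α * β) * X * fQ)
    (hfQ : fQ = C (α * β) * X * g 0 + C (α ^ 2) * X * fQ)
    (hg : ∀ N : ℕ, g (N + 1) = C (α * β) * X * g N + C (α * β) * X * g (N + 2)
        + C (α ^ 2 + β ^ 2) * X * g (N + 1))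
    (hg0 : g 0 = C (α * β) * X * f 0 + C (α * β) * X * g 1
        + C (α * β) * X * fQ + C (α ^ 2 + β ^ 2) * X * g 0)
    (hsupp : ∀ m N : ℕ, m < N → coeff m (f N) = 0 ∧ coeff m (g N) = 0) :
    (U - 2 * U * Zv * CC (α ^ 2) - Zv * CC (α * β) * U ^ 2 + Zv ^ 2 * CC (α ^ 3 * β) * U ^ 2
        - Zv * CC (α * β) + Zv ^ 2 * CC (α ^ 3 * β) + Zv ^ 2 * U * CC (α ^ 4)
        - Zv * U * CC (β ^ 2) + Zv ^ 2 * U * CC (β ^ 2 * α ^ 2)) * PowerSeries.mk f =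
      -(U * Zv * CC (α ^ 2)) + U * Zv ^ 2 * CC (α ^ 2 * β ^ 2) * CP (g 0)
        - Zv * CC (α * β) * CP (f 0) + Zv ^ 2 * CC (α ^ 3 * β) * CP (f 0)
        + U + U ^ 2 * Zv ^ 2 * CC (α * β ^ 3) * CP (g 0) ∧
    (U - 2 * U * Zv * CC (α ^ 2) - Zv * CC (α * β) * U ^ 2 + Zv ^ 2 * CC (α ^ 3 * β) * U ^ 2
        - Zv * CC (α * β) + Zv ^ 2 * CC (α ^ 3 * β) + Zv ^ 2 * U * CC (α ^ 4)
        - Zv * U * CC (β ^ 2) + Zv ^ 2 * U * CC (β ^ 2 * α ^ 2)) * PowerSeries.mk g =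
      -(Zv * CC (α * β)) * (-(U * Zv * CC (α * β)) * CP (g 0) + CP (g 0)
        - Zv * CC (α ^ 2) * CP (g 0) + U * Zv * CC (α ^ 2) * CP (f 0) - U * CP (f 0)) :=
  twoStep_solved_forms_general α β f g fQ hf hf1 hf0 hfQ hg hg0
end
end

section
/- The composition f_0∘Z satisfies, in ℝ[[v]]: αβ·(1−v³)·(f_0∘Z) = (vα+β)(α+vβ). -/
/-!
Write `D = (α+βv)(β+αv)`, so that `D·Z = v`. Substituting `Z` for `z` and multiplying by `D`
turns every bulk equation into `αβ(1+v²)uₙ = αβ·v(uₙ₋₁+uₙ₊₁)`, i.e. `sₙ = v·sₙ₊₁` for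
`sₙ = uₙ - v·uₙ₋₁`. So the first `sₙ` of each chain is divisible by every power of `v`, hence
zero: `f₂ = v f₁` and `g₁ = v g₀`. The four boundary equations then form a linear system over
`ℝ[[v]]`, solved by cancelling the non-zero-divisors `αβ`, `β` and `α + βv`.
-/

open PowerSeries Filter

noncomputable section

/-- Composition `h ∘ Z` of formal power series; this is the usual composition whenever
`Z` has zero constant term (then for each `n` only finitely many terms contribute). -/
def psComp (h Z : PowerSeries ℝ) : PowerSeries ℝ :=
  PowerSeries.mk fun n => ∑' k : ℕ, (PowerSeries.coeff k h) * (PowerSeries.coeff n (Z ^ k))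

/-- The substitution series `Z = v · ((α+βv)(β+αv))⁻¹ ∈ ℝ[[v]]`; the inverse exists since
the constant term `αβ` is nonzero, and `Z` has zero constant term. -/
def Zsub (α β : ℝ) : PowerSeries ℝ :=
  PowerSeries.X * (((PowerSeries.C α) + (PowerSeries.C β) * PowerSeries.X) *
    ((PowerSeries.C β) + (PowerSeries.C α) * PowerSeries.X))⁻¹

theorem PowerSeries.eq_zero_of_forall_eq_X_mul {R : Type*} [Semiring R] {s : ℕ → R⟦X⟧}
    (h : ∀ N, s N = X * s (N + 1)) : s 0 = 0 := by
  have hpow : ∀ m, s 0 = X ^ m * s m := by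
    intro m
    induction m with
    | zero => rw [pow_zero, one_mul]
    | succ m ih => rw [ih, h m, ← mul_assoc, ← pow_succ]
  ext n
  rw [hpow (n + 1), coeff_X_pow_mul', if_neg (by omega), map_zero]

/-- The Knödel–Böhm–Hornik system with the formal variable replaced by an arbitrary series `z`,
so that solutions can be transported along substitutions. -/
structure IsKBHSolution {k : Type*} [CommRing k] (α β : k) (z : k⟦X⟧) (f g : ℕ → k⟦X⟧)
    (fQ : k⟦X⟧) : Prop where
  bulk_f : ∀ N : ℕ, f (N + 2) = C (α * β) * z * f (N + 1) + C (α * β) * z * f (N + 3)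
    + C (α ^ 2 + β ^ 2) * z * f (N + 2)
  f_one : f 1 = C (α * β) * z * f 0 + C (α * β) * z * f 2
    + C (α ^ 2 + β ^ 2) * z * f 1 + C (β ^ 2) * z * fQ
  f_zero : f 0 = 1 + C (α * β) * z * f 1 + C (α ^ 2 + β ^ 2) * z * f 0 + C (α * β) * z * fQ
  fQ_eq : fQ = C (α * β) * z * g 0 + C (α ^ 2) * z * fQ
  bulk_g : ∀ N : ℕ, g (N + 1) = C (α * β) * z * g N + C (α * β) * z * g (N + 2)
    + C (α ^ 2 + β ^ 2) * z * g (N + 1)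
  g_zero : g 0 = C (α * β) * z * f 0 + C (α * β) * z * g 1
    + C (α * β) * z * fQ + C (α ^ 2 + β ^ 2) * z * g 0

namespace IsKBHSolution

variable {k : Type*} [CommRing k] {α β : k} {z : k⟦X⟧} {f g : ℕ → k⟦X⟧} {fQ : k⟦X⟧}

theorem map (h : IsKBHSolution α β z f g fQ) (φ : k⟦X⟧ →ₐ[k] k⟦X⟧) :
    IsKBHSolution α β (φ z) (φ ∘ f) (φ ∘ g) (φ fQ) := by
  have hC : ∀ c, φ (C c) = C c := φ.commutes
  obtain ⟨hf, hf1, hf0, hfQ, hg, hg0⟩ := h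
  exact ⟨fun N => by simpa [hC] using congrArg φ (hf N), by simpa [hC] using congrArg φ hf1,
    by simpa [hC] using congrArg φ hf0, by simpa [hC] using congrArg φ hfQ,
    fun N => by simpa [hC] using congrArg φ (hg N), by simpa [hC] using congrArg φ hg0⟩

section IsDomain

variable [IsDomain k]

theorem bulk_one_eq_X_mul_zero {u : ℕ → k⟦X⟧} (hαβ : α * β ≠ 0)
    (hz : (C α + C β * X) * (C β + C α * X) * z = X)
    (hu : ∀ N : ℕ, u (N + 1) = C (α * β) * z * u N + C (α * β) * z * u (N + 2)
      + C (α ^ 2 + β ^ 2) * z * u (N + 1)) :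
    u 1 = X * u 0 := by
  have hC : C (α * β) ≠ 0 := (map_ne_zero_iff _ C_injective).mpr hαβ
  have hshift : ∀ N, u (N + 1) - X * u N = X * (u (N + 2) - X * u (N + 1)) := fun N =>
    mul_left_cancel₀ hC <| by
      simp only [map_mul, map_add, map_pow] at hu ⊢
      linear_combination (C α + C β * X) * (C β + C α * X) * hu N
        + (C α * C β * u N + C α * C β * u (N + 2) + (C α ^ 2 + C β ^ 2) * u (N + 1)) * hz
  exact sub_eq_zero.mp (eq_zero_of_forall_eq_X_mul (s := fun N => u (N + 1) - X * u N) hshift)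

theorem mul_f_zero_eq (h : IsKBHSolution α β z f g fQ) (hα : α ≠ 0) (hβ : β ≠ 0)
    (hz : (C α + C β * X) * (C β + C α * X) * z = X) :
    C (α * β) * (1 - X ^ 3) * f 0 = (X * C α + C β) * (C α + X * C β) := by
  have hαβ : α * β ≠ 0 := mul_ne_zero hα hβ
  have hf2 : f 2 = X * f 1 := bulk_one_eq_X_mul_zero (u := fun N => f (N + 1)) hαβ hz h.bulk_f
  have hg1 : g 1 = X * g 0 := bulk_one_eq_X_mul_zero hαβ hz h.bulk_g
  obtain ⟨-, hf1, hf0, hfQ, -, hg0⟩ := h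
  have hCαβ : C α * C β ≠ 0 := by rw [← map_mul]; exact (map_ne_zero_iff _ C_injective).mpr hαβ
  have hCβ : C β ≠ 0 := (map_ne_zero_iff _ C_injective).mpr hβ
  have hlin : C α + C β * X ≠ 0 := fun h0 => hα (by simpa using congrArg constantCoeff h0)
  simp only [map_mul, map_add, map_pow] at hf1 hf0 hfQ hg0 ⊢
  set D := (C α + C β * X) * (C β + C α * X)
  have hg0' : g 0 = X * f 0 + X * fQ := mul_left_cancel₀ hCαβ <| by
    linear_combination D * hg0 + C α * C β * X * hg1
      + (C α * C β * f 0 + C α * C β * g 1 + C α * C β * fQ + (C α ^ 2 + C β ^ 2) * g 0) * hz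
  have hfQ' : fQ * (C α + C β * X) = C α * X ^ 2 * f 0 := mul_left_cancel₀ hCβ <| by
    linear_combination D * hfQ + C α * C β * X * hg0' + (C α * C β * g 0 + C α ^ 2 * fQ) * hz
  have hf1' : f 1 * (C α + C β * X) = X * f 0 * (C α + C β * X) + C β * X ^ 3 * f 0 :=
    mul_left_cancel₀ hCαβ <| by
      linear_combination (C α + C β * X) * (D * hf1 + (C α * C β * f 0 + C α * C β * f 2
        + (C α ^ 2 + C β ^ 2) * f 1 + C β ^ 2 * fQ) * hz)
        + C α * C β * X * (C α + C β * X) * hf2 + C β ^ 2 * X * hfQ'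
  exact mul_left_cancel₀ hlin <| by
    linear_combination (C α + C β * X) * (D * hf0
      + (C α * C β * f 1 + (C α ^ 2 + C β ^ 2) * f 0 + C α * C β * fQ) * hz)
      + C α * C β * X * hf1' + C α * C β * X * hfQ'

end IsDomain

end IsKBHSolution

theorem psComp_eq_subst {Z : ℝ⟦X⟧} (hZ : HasSubst Z) (h : ℝ⟦X⟧) : psComp h Z = h.subst Z := by
  ext n
  rw [psComp, coeff_mk, coeff_subst' hZ]
  exact tsum_eq_finsum (coeff_subst_finite' hZ h n)

theorem constantCoeff_Zsub (α β : ℝ) : constantCoeff (Zsub α β) = 0 := by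
  simp [Zsub]

theorem mul_Zsub {α β : ℝ} (hα : α ≠ 0) (hβ : β ≠ 0) :
    (C α + C β * X) * (C β + C α * X) * Zsub α β = X := by
  have hD : constantCoeff ((C α + C β * X) * (C β + C α * X)) ≠ 0 := by simpa using ⟨hα, hβ⟩
  rw [Zsub, mul_left_comm, PowerSeries.mul_inv_cancel _ hD, mul_one]

theorem twoStep_f0_substituted_general
    (α β : ℝ) (hα0 : 0 < α) (hα1 : α < 1) (hβ : β = 1 - α)
    (f g : ℕ → PowerSeries ℝ) (fQ : PowerSeries ℝ)
    (hf : ∀ N : ℕ, f (N + 2) =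
      C (α * β) * X * f (N + 1) + C (α * β) * X * f (N + 3)
        + C (α ^ 2 + β ^ 2) * X * f (N + 2))
    (hf1 : f 1 = C (α * β) * X * f 0 + C (α * β) * X * f 2
        + C (α ^ 2 + β ^ 2) * X * f 1 + C (β ^ 2) * X * fQ)
    (hf0 : f 0 = 1 + C (α * β) * X * f 1 + C (α ^ 2 + β ^ 2) * X * f 0
        + C (α * β) * X * fQ)
    (hfQ : fQ = C (α * β) * X * g 0 + C (α ^ 2) * X * fQ)
    (hg : ∀ N : ℕ, g (N + 1) = C (α * β) * X * g N + C (α * β) * X * g (N + 2)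
        + C (α ^ 2 + β ^ 2) * X * g (N + 1))
    (hg0 : g 0 = C (α * β) * X * f 0 + C (α * β) * X * g 1
        + C (α * β) * X * fQ + C (α ^ 2 + β ^ 2) * X * g 0) :
    C (α * β) * (1 - X ^ 3) * psComp (f 0) (Zsub α β) =
      (X * C α + C β) * (C α + X * C β) := by
  have hα : α ≠ 0 := hα0.ne'
  have hβ0 : β ≠ 0 := by rw [hβ]; exact sub_ne_zero.mpr hα1.ne'
  have hZ : HasSubst (Zsub α β) := HasSubst.of_constantCoeff_zero' (constantCoeff_Zsub α β)
  have hsys : IsKBHSolution α β X f g fQ := ⟨hf, hf1, hf0, hfQ, hg, hg0⟩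
  have h := (hsys.map (substAlgHom hZ)).mul_f_zero_eq hα hβ0
    (by rw [substAlgHom_X]; exact mul_Zsub hα hβ0)
  rwa [psComp_eq_subst hZ, ← coe_substAlgHom hZ]

/-- After the substitution `z = v/((α+βv)(β+αv))`, the series `f₀` becomes rational:
`αβ(1-v³)·(f₀∘Z) = (vα+β)(α+vβ)`. -/
theorem twoStep_f0_substituted
    (α β : ℝ) (hα0 : 0 < α) (hα1 : α < 1) (hβ : β = 1 - α)
    (f g : ℕ → PowerSeries ℝ) (fQ : PowerSeries ℝ)
    (hf : ∀ N : ℕ, f (N + 2) =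
      C (α * β) * X * f (N + 1) + C (α * β) * X * f (N + 3)
        + C (α ^ 2 + β ^ 2) * X * f (N + 2))
    (hf1 : f 1 = C (α * β) * X * f 0 + C (α * β) * X * f 2
        + C (α ^ 2 + β ^ 2) * X * f 1 + C (β ^ 2) * X * fQ)
    (hf0 : f 0 = 1 + C (α * β) * X * f 1 + C (α ^ 2 + β ^ 2) * X * f 0
        + C (α * β) * X * fQ)
    (hfQ : fQ = C (α * β) * X * g 0 + C (α ^ 2) * X * fQ)
    (hg : ∀ N : ℕ, g (N + 1) = C (α * β) * X * g N + C (α * β) * X * g (N + 2)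
        + C (α ^ 2 + β ^ 2) * X * g (N + 1))
    (hg0 : g 0 = C (α * β) * X * f 0 + C (α * β) * X * g 1
        + C (α * β) * X * fQ + C (α ^ 2 + β ^ 2) * X * g 0)
    (hsupp : ∀ m N : ℕ, m < N → coeff m (f N) = 0 ∧ coeff m (g N) = 0) :
    C (α * β) * (1 - X ^ 3) * psComp (f 0) (Zsub α β) =
      (X * C α + C β) * (C α + X * C β) :=
  twoStep_f0_substituted_general α β hα0 hα1 hβ f g fQ hf hf1 hf0 hfQ hg hg0
end
end

section
/- There exists a unique formal power series V ∈ ℝ[[z]] with zero constant term satisfying V = z·(α+βV)·(β+αV), and for every H ∈ ℝ[[v]] and every integer N ≥ 1, the coefficient of z^N in the composition H∘V equals the coefficient of v^N in αβ·(1−v²)·(α+βv)^{N−1}·(β+αv)^{N−1}·H(v). -/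
/-! Write `φ = (α + βv)(β + αv)`, so that the equation reads `V = z φ(V)`. The map
`W ↦ z φ(W)` is a contraction for the `z`-adic filtration, which gives existence and uniqueness.

For the coefficients, Lagrange inversion `[z^N] V^k = [v^(N-k)] (φ - vφ') φ^(N-1)` (and
`φ - vφ' = αβ(1 - v²)` here) is proved by strong induction on `N`: writing
`V^k = z^k φ(V)^k` and expanding the polynomial `φ^k` in powers of `V` reduces `N` to `N - k`,
and the case `k = 0` holds because `(φ - vφ') φ^(N-1) = φ^N - v (φ^N)' / N` has no `v^N` term. -/

open PowerSeries Filter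

noncomputable section

section

variable {R : Type*} [CommRing R]

theorem eq_of_forall_X_pow_dvd_sub {A B : R⟦X⟧} (h : ∀ n, X ^ n ∣ A - B) : A = B := by
  ext n
  rw [← sub_eq_zero, ← map_sub]
  exact X_pow_dvd_iff.mp (h (n + 1)) n n.lt_succ_self

theorem X_pow_succ_dvd_X_mul_aeval_sub (q : Polynomial R) {A B : R⟦X⟧} {n : ℕ}
    (h : X ^ n ∣ A - B) :
    X ^ (n + 1) ∣ X * Polynomial.aeval A q - X * Polynomial.aeval B q := by
  have hq : A - B ∣ Polynomial.aeval A q - Polynomial.aeval B q := by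
    simpa only [Polynomial.eval_map_algebraMap] using
      Polynomial.sub_dvd_eval_sub A B (q.map (algebraMap R R⟦X⟧))
  rw [← mul_sub, pow_succ']
  exact mul_dvd_mul_left X (h.trans hq)

theorem constantCoeff_eq_zero_of_eq_X_mul {V W : R⟦X⟧} (h : V = X * W) :
    constantCoeff V = 0 := by
  simp [h]

theorem eq_of_eq_X_mul_aeval (q : Polynomial R) {A B : R⟦X⟧}
    (hA : A = X * Polynomial.aeval A q) (hB : B = X * Polynomial.aeval B q) : A = B := by
  refine eq_of_forall_X_pow_dvd_sub fun n => ?_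
  induction n with
  | zero => simp
  | succ n ih =>
    rw [hA, hB]
    exact X_pow_succ_dvd_X_mul_aeval_sub q ih

theorem exists_eq_X_mul_aeval (q : Polynomial R) :
    ∃ V : R⟦X⟧, V = X * Polynomial.aeval V q := by
  set f : R⟦X⟧ → R⟦X⟧ := fun W => X * Polynomial.aeval W q
  set W : ℕ → R⟦X⟧ := fun n => f^[n] 0
  have hcauchy : ∀ n k, X ^ n ∣ W (n + k) - W n := by
    intro n
    induction n with
    | zero => simp
    | succ n ih =>
      intro k
      simp only [W, Nat.succ_add, Function.iterate_succ_apply']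
      exact X_pow_succ_dvd_X_mul_aeval_sub q (ih k)
  set V : R⟦X⟧ := mk fun n => coeff n (W (n + 1))
  have hV : ∀ n, X ^ n ∣ W n - V := by
    refine fun n => X_pow_dvd_iff.mpr fun m hm => ?_
    obtain ⟨k, rfl⟩ := Nat.exists_eq_add_of_le hm
    rw [map_sub, coeff_mk, ← map_sub]
    exact X_pow_dvd_iff.mp (hcauchy (m + 1) k) m m.lt_succ_self
  refine ⟨V, eq_of_forall_X_pow_dvd_sub fun n => ?_⟩
  rcases n with _ | n
  · simp
  have hfV : X ^ (n + 1) ∣ W (n + 1) - f V := by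
    simpa only [W, Function.iterate_succ_apply'] using X_pow_succ_dvd_X_mul_aeval_sub q (hV n)
  simpa only [sub_add_sub_cancel] using dvd_add (dvd_sub_comm.mp (hV (n + 1))) hfV

theorem existsUnique_eq_X_mul_aeval (q : Polynomial R) :
    ∃! V : R⟦X⟧, V = X * Polynomial.aeval V q :=
  existsUnique_of_exists_of_unique (exists_eq_X_mul_aeval q) fun _ _ => eq_of_eq_X_mul_aeval q

theorem coeff_aeval_eq_coeff_mul_of_forall_pow (p : Polynomial R) {V F : R⟦X⟧} {m : ℕ}
    (h : ∀ i, coeff m (V ^ i) = coeff m (X ^ i * F)) :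
    coeff m (Polynomial.aeval V p) = coeff m ((p : R⟦X⟧) * F) := by
  induction p using Polynomial.induction_on' with
  | add p r hp hr => simp only [map_add, Polynomial.coe_add, add_mul, hp, hr]
  | monomial i a =>
    rw [Polynomial.aeval_monomial, Polynomial.coe_monomial, monomial_eq_C_mul_X_pow,
      PowerSeries.algebraMap_apply, Algebra.algebraMap_self, RingHom.id_apply, mul_assoc,
      coeff_C_mul, coeff_C_mul, h]

theorem constantCoeff_aeval_of_constantCoeff_eq_zero (p : Polynomial R) {V : R⟦X⟧}
    (hV : constantCoeff V = 0) : constantCoeff (Polynomial.aeval V p) = p.coeff 0 := by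
  rw [Polynomial.aeval_def, Polynomial.hom_eval₂, hV, Polynomial.eval₂_at_zero]
  simp

theorem coeff_succ_sub_X_mul_derivative_mul_pow [IsAddTorsionFree R] (φ : R⟦X⟧) (M : ℕ) :
    coeff (M + 1) ((φ - X * derivative R φ) * φ ^ M) = 0 := by
  have hd : (M + 1) • coeff M (derivative R φ * φ ^ M) =
      (M + 1) • coeff (M + 1) (φ ^ (M + 1)) := by
    have := coeff_derivative (φ ^ (M + 1)) M
    rw [Derivation.leibniz_pow, Nat.add_sub_cancel, smul_eq_mul, map_nsmul, mul_comm] at this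
    rw [this, nsmul_eq_mul', Nat.cast_succ]
  rw [sub_mul, mul_assoc, map_sub, coeff_succ_X_mul, ← pow_succ',
    nsmul_right_injective M.succ_ne_zero hd, sub_self]

theorem coeff_pow_of_eq_X_mul_aeval [IsAddTorsionFree R] (q : Polynomial R) {V : R⟦X⟧}
    (hV : V = X * Polynomial.aeval V q) {N : ℕ} (hN : 1 ≤ N) (k : ℕ) :
    coeff N (V ^ k) =
      coeff N (X ^ k * (((q : R⟦X⟧) - X * derivative R q) * (q : R⟦X⟧) ^ (N - 1))) := by
  induction N using Nat.strong_induction_on generalizing k with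
  | _ N ih =>
  obtain ⟨M, rfl⟩ := Nat.exists_eq_add_of_le' hN
  have hV0 : constantCoeff V = 0 := constantCoeff_eq_zero_of_eq_X_mul hV
  obtain rfl | hk := eq_or_ne k 0
  · rw [pow_zero, pow_zero, one_mul, coeff_one, if_neg M.succ_ne_zero, Nat.add_sub_cancel,
      coeff_succ_sub_X_mul_derivative_mul_pow]
  obtain hNk | hkN := lt_or_ge (M + 1) k
  · rw [coeff_X_pow_mul', if_neg hNk.not_ge]
    exact X_pow_dvd_iff.mp (pow_dvd_pow_of_dvd (X_dvd_iff.mpr hV0) k) _ hNk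
  have hVk : V ^ k = X ^ k * Polynomial.aeval V (q ^ k) := by rw [map_pow, ← mul_pow, ← hV]
  rw [hVk, coeff_X_pow_mul', coeff_X_pow_mul', if_pos hkN, if_pos hkN]
  obtain rfl | hlt := hkN.eq_or_lt
  · rw [Nat.sub_self, coeff_zero_eq_constantCoeff_apply, coeff_zero_eq_constantCoeff_apply,
      constantCoeff_aeval_of_constantCoeff_eq_zero _ hV0]
    simp [Polynomial.coeff_zero_eq_eval_zero, pow_succ']
  · rw [coeff_aeval_eq_coeff_mul_of_forall_pow _ (ih (M + 1 - k) (by omega) (by omega)),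
      Polynomial.coe_pow, mul_left_comm, ← pow_add]
    congr 3
    omega

end

theorem coeff_psComp_of_forall_coeff_pow {V F : ℝ⟦X⟧} {N : ℕ}
    (h : ∀ k, coeff N (V ^ k) = coeff N (X ^ k * F)) (H : ℝ⟦X⟧) :
    coeff N (psComp H V) = coeff N (H * F) := by
  rw [psComp, coeff_mk, coeff_mul, Finset.Nat.sum_antidiagonal_eq_sum_range_succ_mk,
    tsum_eq_sum (s := Finset.range (N + 1))]
  · refine Finset.sum_congr rfl fun k hk => ?_
    rw [h, coeff_X_pow_mul', if_pos (Nat.lt_succ_iff.mp (Finset.mem_range.mp hk))]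
  · intro k hk
    rw [h, coeff_X_pow_mul', if_neg (by simpa [Nat.lt_succ_iff] using hk), mul_zero]

theorem inverse_substitution_coeff_formula_general (α β : ℝ) :
    (∃! V : PowerSeries ℝ, constantCoeff V = 0 ∧
      V = X * (C α + C β * V) * (C β + C α * V)) ∧
    (∀ V : PowerSeries ℝ, constantCoeff V = 0 →
      V = X * (C α + C β * V) * (C β + C α * V) →
      ∀ H : PowerSeries ℝ, ∀ N : ℕ, 1 ≤ N →
        coeff N (psComp H V) =
          coeff N (C (α * β) * (1 - X ^ 2) * (C α + C β * X) ^ (N - 1)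
            * (C β + C α * X) ^ (N - 1) * H)) := by
  set q : Polynomial ℝ := (Polynomial.C α + Polynomial.C β * Polynomial.X) *
    (Polynomial.C β + Polynomial.C α * Polynomial.X)
  have hq : (q : ℝ⟦X⟧) = (C α + C β * X) * (C β + C α * X) := by simp [q]
  have hfix (V : ℝ⟦X⟧) : X * (C α + C β * V) * (C β + C α * V) = X * Polynomial.aeval V q := by
    simp [q, mul_assoc]
  have hkernel : (q : ℝ⟦X⟧) - X * derivative ℝ q = C (α * β) * (1 - X ^ 2) := by
    rw [hq]
    simp only [Derivation.leibniz, map_add, map_mul, derivative_C, derivative_X, smul_eq_mul,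
      mul_one, mul_zero, add_zero, zero_add]
    ring
  refine ⟨?_, fun V _ hV H N hN => ?_⟩
  · simp only [hfix]
    exact (existsUnique_congr fun V =>
      ⟨And.right, fun h => ⟨constantCoeff_eq_zero_of_eq_X_mul h, h⟩⟩).mpr
        (existsUnique_eq_X_mul_aeval q)
  · rw [hfix] at hV
    rw [coeff_psComp_of_forall_coeff_pow (coeff_pow_of_eq_X_mul_aeval q hV hN) H, hkernel, hq,
      mul_pow]
    congr 1
    ring

/-- There is a unique power series `V` with zero constant term satisfying
`V = z(α+βV)(β+αV)`, and extraction of coefficients after substituting `V`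
is given by the Cauchy-integral (Lagrange-type) formula. -/
theorem inverse_substitution_coeff_formula (α β : ℝ) (hα0 : 0 < α) (hα1 : α < 1)
    (hβ : β = 1 - α) :
    (∃! V : PowerSeries ℝ, constantCoeff V = 0 ∧
      V = X * (C α + C β * V) * (C β + C α * V)) ∧
    (∀ V : PowerSeries ℝ, constantCoeff V = 0 →
      V = X * (C α + C β * V) * (C β + C α * V) →
      ∀ H : PowerSeries ℝ, ∀ N : ℕ, 1 ≤ N →
        coeff N (psComp H V) =
          coeff N (C (α * β) * (1 - X ^ 2) * (C α + C β * X) ^ (N - 1)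
            * (C β + C α * X) ^ (N - 1) * H)) :=
  inverse_substitution_coeff_formula_general α β

end
end

section
/- In the symmetric case α = 1/2 (so β = 1/2), for every real z with 0 < z < 1 the series Σ_{n≥0} ([z^n]E)·z^n converges and its sum equals (z − 1 + (1+z)·√(1−z)) / (2·(1−z)²), where [z^n]E denotes the n-th coefficient of E. -/
/-!
The coefficients `[zᵐ] f_N`, `[zᵐ] g_N`, `[zᵐ] f_Q` are the distribution after `m` steps of a
Markov chain started in `f₀`, so they are nonnegative with total mass `1`. Hence for `0 < z < 1`
all these series converge at `z`, their values `F_N`, `G_N` are bounded by `1 / (1 - z)`, and they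
satisfy the same system with `X` replaced by `z`. For `α = 1/2` the interior recurrences have
characteristic roots `λ = (1 - s) / (1 + s)` and `1 / λ`, where `s = √(1 - z)`; boundedness
excludes `1 / λ`, and the boundary equations then give `F_{k+1} = G_k = λ^(k+1) / s`. The
arithmetico-geometric series `Σ 2k F_k + (2k+1) G_k` sums to the claimed value, and positivity
lets the sums over `k` and over the powers of `z` be exchanged.
-/

open PowerSeries Filter

noncomputable section

/-- The expected-end generating function `E = Σ_k 2k·f_k + Σ_k (2k+1)·g_k`; for each `n`
the support condition makes the series of `n`-th coefficients a finite sum. -/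
def expectedEnd (f g : ℕ → PowerSeries ℝ) : PowerSeries ℝ :=
  PowerSeries.mk fun n =>
    ∑' k : ℕ, ((2 * k : ℝ) * PowerSeries.coeff n (f k)
      + (2 * (k : ℝ) + 1) * PowerSeries.coeff n (g k))

-- The Knödel–Böhm–Hornik system with weights `a = αβ`, `b = α² + β²`, `c = β²`, `d = α²`: over
-- `ℝ⟦X⟧` with `x = X` it is the system of the statement, over `ℝ` with `x = z` its value at `z`.
structure IsKBHSystem {R : Type*} [CommSemiring R] (a b c d x : R) (f g : ℕ → R) (fQ : R) :
    Prop where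
  f_add_two : ∀ N, f (N + 2) = a * x * f (N + 1) + a * x * f (N + 3) + b * x * f (N + 2)
  f_one : f 1 = a * x * f 0 + a * x * f 2 + b * x * f 1 + c * x * fQ
  f_zero : f 0 = 1 + a * x * f 1 + b * x * f 0 + a * x * fQ
  fQ_eq : fQ = a * x * g 0 + d * x * fQ
  g_add_one : ∀ N, g (N + 1) = a * x * g N + a * x * g (N + 2) + b * x * g (N + 1)
  g_zero : g 0 = a * x * f 0 + a * x * g 1 + a * x * fQ + b * x * g 0

namespace PowerSeries

variable {R : Type*} [Semiring R]

@[simp]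
theorem coeff_succ_C_mul_X_mul (c : R) (p : R⟦X⟧) (m : ℕ) :
    coeff (m + 1) (C c * X * p) = c * coeff m p := by
  rw [mul_assoc, coeff_C_mul, coeff_succ_X_mul]

@[simp]
theorem coeff_zero_C_mul_X_mul (c : R) (p : R⟦X⟧) : coeff 0 (C c * X * p) = 0 := by
  rw [mul_assoc, coeff_C_mul, coeff_zero_X_mul, mul_zero]

theorem summable_coeff_of_eq_zero_of_lt {u : ℕ → ℝ⟦X⟧} {m : ℕ}
    (hu : ∀ N, m < N → coeff m (u N) = 0) :
    Summable fun N => coeff m (u N) :=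
  summable_of_ne_finset_zero (s := Finset.range (m + 1)) fun N hN =>
    hu N (by simpa using hN)

def HasSumAt (p : ℝ⟦X⟧) (z a : ℝ) : Prop :=
  HasSum (fun n => coeff n p * z ^ n) a

variable {p q : ℝ⟦X⟧} {z a b : ℝ}

theorem HasSumAt.unique (hp : HasSumAt p z a) (hp' : HasSumAt p z b) : a = b :=
  HasSum.unique hp hp'

theorem HasSumAt.add (hp : HasSumAt p z a) (hq : HasSumAt q z b) :
    HasSumAt (p + q) z (a + b) := by
  simpa only [HasSumAt, map_add, add_mul] using HasSum.add hp hq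

theorem HasSumAt.C_mul_X_mul (hp : HasSumAt p z a) (c : ℝ) :
    HasSumAt (C c * X * p) z (c * z * a) := by
  refine (hasSum_nat_add_iff' 1).mp ?_
  have e : (fun n => coeff (n + 1) (C c * X * p) * z ^ (n + 1)) =
      fun n => c * z * (coeff n p * z ^ n) := by
    funext n
    rw [coeff_succ_C_mul_X_mul, pow_succ]
    ring
  simpa only [Finset.sum_range_one, coeff_zero_C_mul_X_mul, zero_mul, sub_zero, e] using
    HasSum.mul_left (c * z) hp

theorem hasSumAt_one : HasSumAt 1 z 1 := by
  simpa [HasSumAt, coeff_one] using hasSum_single (f := fun n => coeff n (1 : ℝ⟦X⟧) * z ^ n) 0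
    fun n hn => by simp [coeff_one, hn]

theorem exists_hasSumAt_abs_le (hp : ∀ n, coeff n p ∈ Set.Icc 0 1) (hz0 : 0 ≤ z) (hz1 : z < 1) :
    ∃ a, HasSumAt p z a ∧ |a| ≤ (1 - z)⁻¹ := by
  have hgeom := hasSum_geometric_of_lt_one hz0 hz1
  have hle n : coeff n p * z ^ n ≤ z ^ n := mul_le_of_le_one_left (by positivity) (hp n).2
  have hnn n : 0 ≤ coeff n p * z ^ n := mul_nonneg (hp n).1 (by positivity)
  have hs : Summable fun n => coeff n p * z ^ n := hgeom.summable.of_nonneg_of_le hnn hle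
  refine ⟨_, hs.hasSum, ?_⟩
  rw [abs_of_nonneg (tsum_nonneg hnn)]
  exact hasSum_le hle hs.hasSum hgeom

end PowerSeries

namespace IsKBHSystem

variable {a b c d : ℝ} {f g : ℕ → ℝ⟦X⟧} {fQ : ℝ⟦X⟧}

theorem coeff_succ_f_add_two (h : IsKBHSystem (C a) (C b) (C c) (C d) X f g fQ) (m N : ℕ) :
    coeff (m + 1) (f (N + 2)) =
      a * coeff m (f (N + 1)) + a * coeff m (f (N + 3)) + b * coeff m (f (N + 2)) := by
  simpa using congrArg (coeff (m + 1)) (h.f_add_two N)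

theorem coeff_succ_f_one (h : IsKBHSystem (C a) (C b) (C c) (C d) X f g fQ) (m : ℕ) :
    coeff (m + 1) (f 1) =
      a * coeff m (f 0) + a * coeff m (f 2) + b * coeff m (f 1) + c * coeff m fQ := by
  simpa using congrArg (coeff (m + 1)) h.f_one

theorem coeff_succ_f_zero (h : IsKBHSystem (C a) (C b) (C c) (C d) X f g fQ) (m : ℕ) :
    coeff (m + 1) (f 0) = a * coeff m (f 1) + b * coeff m (f 0) + a * coeff m fQ := by
  simpa [coeff_one] using congrArg (coeff (m + 1)) h.f_zero

theorem coeff_succ_fQ (h : IsKBHSystem (C a) (C b) (C c) (C d) X f g fQ) (m : ℕ) :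
    coeff (m + 1) fQ = a * coeff m (g 0) + d * coeff m fQ := by
  simpa using congrArg (coeff (m + 1)) h.fQ_eq

theorem coeff_succ_g_add_one (h : IsKBHSystem (C a) (C b) (C c) (C d) X f g fQ) (m N : ℕ) :
    coeff (m + 1) (g (N + 1)) =
      a * coeff m (g N) + a * coeff m (g (N + 2)) + b * coeff m (g (N + 1)) := by
  simpa using congrArg (coeff (m + 1)) (h.g_add_one N)

theorem coeff_succ_g_zero (h : IsKBHSystem (C a) (C b) (C c) (C d) X f g fQ) (m : ℕ) :
    coeff (m + 1) (g 0) =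
      a * coeff m (f 0) + a * coeff m (g 1) + a * coeff m fQ + b * coeff m (g 0) := by
  simpa using congrArg (coeff (m + 1)) h.g_zero

theorem coeff_zero_f_zero (h : IsKBHSystem (C a) (C b) (C c) (C d) X f g fQ) :
    coeff 0 (f 0) = 1 := by
  simpa using congrArg (coeff 0) h.f_zero

theorem coeff_zero_fQ (h : IsKBHSystem (C a) (C b) (C c) (C d) X f g fQ) : coeff 0 fQ = 0 := by
  simpa using congrArg (coeff 0) h.fQ_eq

theorem coeff_zero_g_zero (h : IsKBHSystem (C a) (C b) (C c) (C d) X f g fQ) :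
    coeff 0 (g 0) = 0 := by
  simpa using congrArg (coeff 0) h.g_zero

theorem coeff_nonneg (h : IsKBHSystem (C a) (C b) (C c) (C d) X f g fQ)
    (hsupp : ∀ m N : ℕ, m < N → coeff m (f N) = 0 ∧ coeff m (g N) = 0)
    (ha : 0 ≤ a) (hb : 0 ≤ b) (hc : 0 ≤ c) (hd : 0 ≤ d) (m : ℕ) :
    (∀ N, 0 ≤ coeff m (f N)) ∧ (∀ N, 0 ≤ coeff m (g N)) ∧ 0 ≤ coeff m fQ := by
  induction m with
  | zero =>
    refine ⟨fun N => ?_, fun N => ?_, h.coeff_zero_fQ.ge⟩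
    · rcases N with _ | N
      · rw [h.coeff_zero_f_zero]; exact zero_le_one
      · rw [(hsupp 0 (N + 1) N.succ_pos).1]
    · rcases N with _ | N
      · rw [h.coeff_zero_g_zero]
      · rw [(hsupp 0 (N + 1) N.succ_pos).2]
  | succ m ih =>
    obtain ⟨hf, hg, hQ⟩ := ih
    refine ⟨fun N => ?_, fun N => ?_, ?_⟩
    · rcases N with _ | _ | N
      · rw [h.coeff_succ_f_zero]; have := hf 0; have := hf 1; positivity
      · rw [h.coeff_succ_f_one]; have := hf 0; have := hf 1; have := hf 2; positivity
      · rw [h.coeff_succ_f_add_two]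
        have := hf (N + 1); have := hf (N + 2); have := hf (N + 3); positivity
    · rcases N with _ | N
      · rw [h.coeff_succ_g_zero]; have := hf 0; have := hg 0; have := hg 1; positivity
      · rw [h.coeff_succ_g_add_one]; have := hg N; have := hg (N + 1); have := hg (N + 2)
        positivity
    · rw [h.coeff_succ_fQ]; have := hg 0; positivity

theorem tsum_coeff_succ_f (h : IsKBHSystem (C a) (C b) (C c) (C d) X f g fQ)
    (hsupp : ∀ m N : ℕ, m < N → coeff m (f N) = 0 ∧ coeff m (g N) = 0) (m : ℕ) :
    ∑' N, coeff (m + 1) (f N) =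
      (2 * a + b) * ∑' N, coeff m (f N) - a * coeff m (f 0) + (a + c) * coeff m fQ := by
  have hs := (summable_coeff_of_eq_zero_of_lt fun N hN => (hsupp m N hN).1).hasSum
  have hs' := (summable_coeff_of_eq_zero_of_lt fun N hN => (hsupp (m + 1) N hN).1).hasSum
  have shift k := (hasSum_nat_add_iff' k).mpr hs
  have key := ((hasSum_nat_add_iff' 2).mpr hs').unique <| by
    simpa only [h.coeff_succ_f_add_two] using
      (((shift 1).mul_left a).add ((shift 3).mul_left a)).add ((shift 2).mul_left b)
  simp only [Finset.sum_range_succ, Finset.sum_range_zero, h.coeff_succ_f_zero,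
    h.coeff_succ_f_one] at key
  linear_combination key

theorem tsum_coeff_succ_g (h : IsKBHSystem (C a) (C b) (C c) (C d) X f g fQ)
    (hsupp : ∀ m N : ℕ, m < N → coeff m (f N) = 0 ∧ coeff m (g N) = 0) (m : ℕ) :
    ∑' N, coeff (m + 1) (g N) = (2 * a + b) * ∑' N, coeff m (g N)
      + a * coeff m (f 0) + a * coeff m fQ - a * coeff m (g 0) := by
  have hs := (summable_coeff_of_eq_zero_of_lt fun N hN => (hsupp m N hN).2).hasSum
  have hs' := (summable_coeff_of_eq_zero_of_lt fun N hN => (hsupp (m + 1) N hN).2).hasSum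
  have shift k := (hasSum_nat_add_iff' k).mpr hs
  have key := ((hasSum_nat_add_iff' 1).mpr hs').unique <| by
    simpa only [h.coeff_succ_g_add_one] using
      ((hs.mul_left a).add ((shift 2).mul_left a)).add ((shift 1).mul_left b)
  simp only [Finset.sum_range_succ, Finset.sum_range_zero, h.coeff_succ_g_zero] at key
  linear_combination key

-- The weights leaving each state `f_N`, `g_N` sum to `2a + b`, those leaving `f_Q` to `2a + c + d`.
theorem mass_eq_one (h : IsKBHSystem (C a) (C b) (C c) (C d) X f g fQ)
    (hsupp : ∀ m N : ℕ, m < N → coeff m (f N) = 0 ∧ coeff m (g N) = 0)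
    (hab : 2 * a + b = 1) (hacd : 2 * a + c + d = 1) (m : ℕ) :
    coeff m fQ + ∑' N, coeff m (f N) + ∑' N, coeff m (g N) = 1 := by
  induction m with
  | zero =>
    have hzero {N : ℕ} (hN : N ≠ 0) := hsupp 0 N (Nat.pos_of_ne_zero hN)
    rw [tsum_eq_single 0 fun N hN => (hzero hN).1, tsum_eq_single 0 fun N hN => (hzero hN).2,
      h.coeff_zero_fQ, h.coeff_zero_f_zero, h.coeff_zero_g_zero]
    norm_num
  | succ m ih =>
    rw [h.coeff_succ_fQ, h.tsum_coeff_succ_f hsupp, h.tsum_coeff_succ_g hsupp]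
    linear_combination ih + (∑' N, coeff m (f N) + ∑' N, coeff m (g N)) * hab
      + coeff m fQ * hacd

theorem coeff_mem_Icc (h : IsKBHSystem (C a) (C b) (C c) (C d) X f g fQ)
    (hsupp : ∀ m N : ℕ, m < N → coeff m (f N) = 0 ∧ coeff m (g N) = 0)
    (ha : 0 ≤ a) (hb : 0 ≤ b) (hc : 0 ≤ c) (hd : 0 ≤ d)
    (hab : 2 * a + b = 1) (hacd : 2 * a + c + d = 1) (m : ℕ) :
    (∀ N, coeff m (f N) ∈ Set.Icc 0 1) ∧ (∀ N, coeff m (g N) ∈ Set.Icc 0 1) ∧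
      coeff m fQ ∈ Set.Icc 0 1 := by
  obtain ⟨hf, hg, hQ⟩ := h.coeff_nonneg hsupp ha hb hc hd m
  have hmass := h.mass_eq_one hsupp hab hacd m
  have hF : ∀ N, coeff m (f N) ≤ ∑' N, coeff m (f N) := fun N =>
    (summable_coeff_of_eq_zero_of_lt fun N hN => (hsupp m N hN).1).le_tsum N fun N _ => hf N
  have hG : ∀ N, coeff m (g N) ≤ ∑' N, coeff m (g N) := fun N =>
    (summable_coeff_of_eq_zero_of_lt fun N hN => (hsupp m N hN).2).le_tsum N fun N _ => hg N
  have hF0 : 0 ≤ ∑' N, coeff m (f N) := tsum_nonneg hf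
  have hG0 : 0 ≤ ∑' N, coeff m (g N) := tsum_nonneg hg
  exact ⟨fun N => ⟨hf N, by linarith [hF N]⟩, fun N => ⟨hg N, by linarith [hG N]⟩,
    ⟨hQ, by linarith⟩⟩

theorem evalAt {z : ℝ}
    (h : IsKBHSystem (C a) (C b) (C c) (C d) X f g fQ) {F G : ℕ → ℝ} {Q : ℝ}
    (hF : ∀ N, HasSumAt (f N) z (F N)) (hG : ∀ N, HasSumAt (g N) z (G N))
    (hQ : HasSumAt fQ z Q) : IsKBHSystem a b c d z F G Q where
  f_add_two N := (hF (N + 2)).unique <| by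
    rw [h.f_add_two]
    exact (((hF _).C_mul_X_mul a).add ((hF _).C_mul_X_mul a)).add ((hF _).C_mul_X_mul b)
  f_one := (hF 1).unique <| by
    rw [h.f_one]
    exact ((((hF _).C_mul_X_mul a).add ((hF _).C_mul_X_mul a)).add
      ((hF _).C_mul_X_mul b)).add (hQ.C_mul_X_mul c)
  f_zero := (hF 0).unique <| by
    rw [h.f_zero]
    exact ((hasSumAt_one.add ((hF _).C_mul_X_mul a)).add ((hF _).C_mul_X_mul b)).add
      (hQ.C_mul_X_mul a)
  fQ_eq := hQ.unique <| by
    rw [h.fQ_eq]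
    exact ((hG _).C_mul_X_mul a).add (hQ.C_mul_X_mul d)
  g_add_one N := (hG (N + 1)).unique <| by
    rw [h.g_add_one]
    exact (((hG _).C_mul_X_mul a).add ((hG _).C_mul_X_mul a)).add ((hG _).C_mul_X_mul b)
  g_zero := (hG 0).unique <| by
    rw [h.g_zero]
    exact ((((hF _).C_mul_X_mul a).add ((hG _).C_mul_X_mul a)).add
      (hQ.C_mul_X_mul a)).add ((hG _).C_mul_X_mul b)

end IsKBHSystem

theorem hasSum_expectedEnd {f g : ℕ → ℝ⟦X⟧} {z S : ℝ} {F G : ℕ → ℝ} (hz : 0 ≤ z)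
    (hf : ∀ n k, 0 ≤ coeff n (f k)) (hg : ∀ n k, 0 ≤ coeff n (g k))
    (hF : ∀ k, HasSumAt (f k) z (F k)) (hG : ∀ k, HasSumAt (g k) z (G k))
    (hS : HasSum (fun k : ℕ => 2 * k * F k + (2 * k + 1) * G k) S) :
    HasSum (fun n => coeff n (expectedEnd f g) * z ^ n) S := by
  set W : ℕ × ℕ → ℝ := fun p =>
    (2 * p.2 * coeff p.1 (f p.2) + (2 * p.2 + 1) * coeff p.1 (g p.2)) * z ^ p.1
  have hW : 0 ≤ W := fun p => by have := hf p.1 p.2; have := hg p.1 p.2; positivity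
  have hcol k : HasSum (fun n => W (n, k)) (2 * k * F k + (2 * k + 1) * G k) := by
    have e : (fun n => W (n, k)) = fun n =>
        2 * k * (coeff n (f k) * z ^ n) + (2 * k + 1) * (coeff n (g k) * z ^ n) := by
      funext n
      simp only [W]
      ring
    rw [e]
    exact (HasSum.mul_left _ (hF k)).add (HasSum.mul_left _ (hG k))
  have hWswap : Summable (W ∘ Prod.swap) := by
    refine (summable_prod_of_nonneg fun p => hW p.swap).mpr ⟨fun k => (hcol k).summable, ?_⟩
    simpa only [Function.comp_apply, Prod.swap_prod_mk, (hcol _).tsum_eq] using hS.summable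
  have hWS : HasSum W S := by
    have h := hWswap.hasSum
    rw [(hWswap.hasSum.prod_fiberwise fun k => hcol k).unique hS] at h
    exact (Equiv.prodComm ℕ ℕ).hasSum_iff.mp h
  refine hWS.prod_fiberwise fun n => ?_
  simpa only [W, expectedEnd, coeff_mk, tsum_mul_right] using
    (hWS.summable.prod_factor n).hasSum

theorem eq_zero_of_abs_pow_mul_le {μ c B : ℝ} (hμ : 1 < μ) (hB : ∀ k, |μ ^ k * c| ≤ B) :
    c = 0 := by
  by_contra hc
  have hlim : Tendsto (fun k => μ ^ k * |c|) atTop atTop :=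
    (tendsto_pow_atTop_atTop_of_one_lt hμ).atTop_mul_const (abs_pos.mpr hc)
  obtain ⟨k, hk⟩ := (hlim.eventually_gt_atTop B).exists
  have := hB k
  rw [abs_mul, abs_of_pos (pow_pos (zero_lt_one.trans hμ) k)] at this
  linarith

theorem eq_pow_mul_of_abs_le {l μ B : ℝ} (hμ : 1 < μ) (hlμ : l * μ = 1) {u : ℕ → ℝ}
    (hB : ∀ k, |u k| ≤ B) (hrec : ∀ k, u (k + 2) = (l + μ) * u (k + 1) - u k) (k : ℕ) :
    u k = l ^ k * u 0 := by
  have hgeom k : u (k + 1) - l * u k = μ ^ k * (u 1 - l * u 0) := by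
    induction k with
    | zero => simp
    | succ k ih => rw [hrec]; linear_combination μ * ih + u k * hlμ
  have hbdd k : |μ ^ k * (u 1 - l * u 0)| ≤ B + |l| * B := by
    rw [← hgeom]
    calc |u (k + 1) - l * u k| ≤ |u (k + 1)| + |l| * |u k| := by
          simpa only [abs_mul] using abs_sub (u (k + 1)) (l * u k)
      _ ≤ B + |l| * B := by gcongr <;> exact hB _
  have h0 := eq_zero_of_abs_pow_mul_le hμ hbdd
  induction k with
  | zero => simp
  | succ k ih =>
    rw [pow_succ, mul_comm _ l, mul_assoc, ← ih]
    linear_combination hgeom k + μ ^ k * h0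

namespace IsKBHSystem

variable {s B : ℝ} {F G : ℕ → ℝ} {Q : ℝ}

theorem eq_pow_mul_of_symmetric
    (h : IsKBHSystem (1 / 4) (1 / 2) (1 / 4) (1 / 4) (1 - s ^ 2) F G Q) (hs0 : 0 < s)
    (hs1 : s < 1) (hF : ∀ k, |F k| ≤ B) (hG : ∀ k, |G k| ≤ B) :
    (∀ k, F (k + 1) = ((1 - s) / (1 + s)) ^ k * F 1) ∧
      ∀ k, G k = ((1 - s) / (1 + s)) ^ k * G 0 := by
  have h1 : 1 - s ≠ 0 := by linarith
  have h2 : 1 + s ≠ 0 := by linarith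
  have hμ : 1 < (1 + s) / (1 - s) := by rw [one_lt_div (by linarith)]; linarith
  have hlμ : (1 - s) / (1 + s) * ((1 + s) / (1 - s)) = 1 := by field_simp
  -- the characteristic roots of the interior recurrence are `(1 - s) / (1 + s)` and its inverse
  have hrec {x y w : ℝ}
      (e : y = 1 / 4 * (1 - s ^ 2) * x + 1 / 4 * (1 - s ^ 2) * w + 1 / 2 * (1 - s ^ 2) * y) :
      w = ((1 - s) / (1 + s) + (1 + s) / (1 - s)) * y - x := by
    field_simp
    linear_combination (-4) * e
  exact ⟨eq_pow_mul_of_abs_le hμ hlμ (fun k => hF (k + 1)) fun k => hrec (h.f_add_two k),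
    eq_pow_mul_of_abs_le hμ hlμ hG fun k => hrec (h.g_add_one k)⟩

theorem eq_div_of_symmetric
    (h : IsKBHSystem (1 / 4) (1 / 2) (1 / 4) (1 / 4) (1 - s ^ 2) F G Q) (hs0 : 0 < s)
    (hs1 : s < 1) (hF : ∀ k, |F k| ≤ B) (hG : ∀ k, |G k| ≤ B) :
    (∀ k, F (k + 1) = ((1 - s) / (1 + s)) ^ (k + 1) / s) ∧
      ∀ k, G k = ((1 - s) / (1 + s)) ^ (k + 1) / s := by
  obtain ⟨hFk, hGk⟩ := h.eq_pow_mul_of_symmetric hs0 hs1 hF hG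
  have h2 : 1 + s ≠ 0 := by linarith
  have hF2 : (1 + s) * F 2 = (1 - s) * F 1 := by rw [hFk 1]; field_simp
  have hG1 : (1 + s) * G 1 = (1 - s) * G 0 := by rw [hGk 1]; field_simp
  have hF1 : (1 + s) * F 1 = (1 - s) * (F 0 + Q) := by
    refine mul_left_cancel₀ (pow_ne_zero 2 h2) ?_
    linear_combination 4 * (1 + s) * h.f_one + (1 - s) * (1 + s) * hF2
  have hG0 : (1 + s) * G 0 = (1 - s) * (F 0 + Q) := by
    refine mul_left_cancel₀ (pow_ne_zero 2 h2) ?_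
    linear_combination 4 * (1 + s) * h.g_zero + (1 - s) * (1 + s) * hG1
  have hP : s * (F 0 + Q) = 1 := by
    linear_combination h.f_zero + h.fQ_eq + (1 - s) / 4 * (hF1 + hG0)
  have hF1' : F 1 = (1 - s) / (1 + s) / s := by
    field_simp
    linear_combination s * hF1 + (1 - s) * hP
  have hG0' : G 0 = (1 - s) / (1 + s) / s := by
    field_simp
    linear_combination s * hG0 + (1 - s) * hP
  constructor
  · intro k; rw [hFk, hF1', pow_succ]; ring
  · intro k; rw [hGk, hG0', pow_succ]; ring

theorem hasSum_of_symmetric_of_one_sub_sq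
    (h : IsKBHSystem (1 / 4) (1 / 2) (1 / 4) (1 / 4) (1 - s ^ 2) F G Q) (hs0 : 0 < s)
    (hs1 : s < 1) (hF : ∀ k, |F k| ≤ B) (hG : ∀ k, |G k| ≤ B) :
    HasSum (fun k : ℕ => 2 * k * F k + (2 * k + 1) * G k) ((1 - s) * (2 + s) / (2 * s ^ 3)) := by
  obtain ⟨hFk, hGk⟩ := h.eq_div_of_symmetric hs0 hs1 hF hG
  set l := (1 - s) / (1 + s) with hl
  have hl0 : 0 ≤ l := div_nonneg (by linarith) (by linarith)
  have hl1 : l < 1 := (div_lt_one (by linarith)).mpr (by linarith)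
  have hterm : (fun k : ℕ => 2 * k * F k + (2 * k + 1) * G k) =
      fun k : ℕ => 2 * (1 + l) / s * (k * l ^ k) + l / s * l ^ k := by
    funext k
    rcases k with _ | k
    · simp [hGk]
    · rw [hFk, hGk]; push_cast; ring
  have hval : 2 * (1 + l) / s * (l / (1 - l) ^ 2) + l / s * (1 - l)⁻¹ =
      (1 - s) * (2 + s) / (2 * s ^ 3) := by
    have : s ≠ 0 := hs0.ne'
    have : 1 + s ≠ 0 := by linarith
    have h1l : 1 - l = 2 * s / (1 + s) := by rw [hl]; field_simp; ring
    rw [h1l, hl]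
    field_simp
    ring
  rw [hterm, ← hval]
  exact ((hasSum_coe_mul_geometric_of_norm_lt_one (by rwa [Real.norm_of_nonneg hl0])).mul_left
    (2 * (1 + l) / s)).add ((hasSum_geometric_of_lt_one hl0 hl1).mul_left (l / s))

theorem hasSum_of_symmetric {z : ℝ}
    (h : IsKBHSystem (1 / 4) (1 / 2) (1 / 4) (1 / 4) z F G Q) (hz0 : 0 < z) (hz1 : z < 1)
    (hF : ∀ k, |F k| ≤ B) (hG : ∀ k, |G k| ≤ B) :
    HasSum (fun k : ℕ => 2 * k * F k + (2 * k + 1) * G k)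
      ((z - 1 + (1 + z) * √(1 - z)) / (2 * (1 - z) ^ 2)) := by
  set s := √(1 - z)
  have hs0 : 0 < s := Real.sqrt_pos.mpr (by linarith)
  have hz : z = 1 - s ^ 2 := by rw [Real.sq_sqrt (by linarith)]; ring
  have hs1 : s < 1 := by nlinarith
  rw [hz] at h ⊢
  convert h.hasSum_of_symmetric_of_one_sub_sq hs0 hs1 hF hG using 1
  field_simp
  ring

end IsKBHSystem

theorem expectedEnd_eval_symmetric_general
    (α β : ℝ) (hβ : β = 1 - α)
    (f g : ℕ → PowerSeries ℝ) (fQ : PowerSeries ℝ)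
    (hf : ∀ N : ℕ, f (N + 2) =
      C (α * β) * X * f (N + 1) + C (α * β) * X * f (N + 3)
        + C (α ^ 2 + β ^ 2) * X * f (N + 2))
    (hf1 : f 1 = C (α * β) * X * f 0 + C (α * β) * X * f 2
        + C (α ^ 2 + β ^ 2) * X * f 1 + C (β ^ 2) * X * fQ)
    (hf0 : f 0 = 1 + C (α * β) * X * f 1 + C (α ^ 2 + β ^ 2) * X * f 0
        + C (α * β) * X * fQ)
    (hfQ : fQ = C (α * β) * X * g 0 + C (α ^ 2) * X * fQ)
    (hg : ∀ N : ℕ, g (N + 1) = C (α * β) * X * g N + C (α * β) * X * g (N + 2)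
        + C (α ^ 2 + β ^ 2) * X * g (N + 1))
    (hg0 : g 0 = C (α * β) * X * f 0 + C (α * β) * X * g 1
        + C (α * β) * X * fQ + C (α ^ 2 + β ^ 2) * X * g 0)
    (hsupp : ∀ m N : ℕ, m < N → coeff m (f N) = 0 ∧ coeff m (g N) = 0) (hhalf : α = 1 / 2) :
    ∀ z : ℝ, 0 < z → z < 1 →
      HasSum (fun n : ℕ => coeff n (expectedEnd f g) * z ^ n)
        ((z - 1 + (1 + z) * Real.sqrt (1 - z)) / (2 * (1 - z) ^ 2)) := by
  subst hhalf hβ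
  have hsys : IsKBHSystem (C (1 / 4)) (C (1 / 2)) (C (1 / 4)) (C (1 / 4)) X f g fQ := by
    norm_num at hf hf1 hf0 hfQ hg hg0
    exact ⟨hf, hf1, hf0, hfQ, hg, hg0⟩
  have hI := hsys.coeff_mem_Icc hsupp (by norm_num) (by norm_num) (by norm_num) (by norm_num)
    (by norm_num) (by norm_num)
  intro z hz0 hz1
  choose F hF hFB using fun N => exists_hasSumAt_abs_le (fun n => (hI n).1 N) hz0.le hz1
  choose G hG hGB using fun N => exists_hasSumAt_abs_le (fun n => (hI n).2.1 N) hz0.le hz1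
  obtain ⟨Q, hQ, -⟩ := exists_hasSumAt_abs_le (fun n => (hI n).2.2) hz0.le hz1
  exact hasSum_expectedEnd hz0.le (fun n k => ((hI n).1 k).1) (fun n k => ((hI n).2.1 k).1) hF hG
    ((hsys.evalAt hF hG hQ).hasSum_of_symmetric hz0 hz1 hFB hGB)

/-- In the symmetric case `α = 1/2`, the expected-end generating function evaluates,
for `0 < z < 1`, to `(z - 1 + (1+z)√(1-z)) / (2(1-z)²)`. -/
theorem expectedEnd_eval_symmetric
    (α β : ℝ) (hα0 : 0 < α) (hα1 : α < 1) (hβ : β = 1 - α)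
    (f g : ℕ → PowerSeries ℝ) (fQ : PowerSeries ℝ)
    (hf : ∀ N : ℕ, f (N + 2) =
      C (α * β) * X * f (N + 1) + C (α * β) * X * f (N + 3)
        + C (α ^ 2 + β ^ 2) * X * f (N + 2))
    (hf1 : f 1 = C (α * β) * X * f 0 + C (α * β) * X * f 2
        + C (α ^ 2 + β ^ 2) * X * f 1 + C (β ^ 2) * X * fQ)
    (hf0 : f 0 = 1 + C (α * β) * X * f 1 + C (α ^ 2 + β ^ 2) * X * f 0
        + C (α * β) * X * fQ)
    (hfQ : fQ = C (α * β) * X * g 0 + C (α ^ 2) * X * fQ)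
    (hg : ∀ N : ℕ, g (N + 1) = C (α * β) * X * g N + C (α * β) * X * g (N + 2)
        + C (α ^ 2 + β ^ 2) * X * g (N + 1))
    (hg0 : g 0 = C (α * β) * X * f 0 + C (α * β) * X * g 1
        + C (α * β) * X * fQ + C (α ^ 2 + β ^ 2) * X * g 0)
    (hsupp : ∀ m N : ℕ, m < N → coeff m (f N) = 0 ∧ coeff m (g N) = 0) (hhalf : α = 1 / 2) :
    ∀ z : ℝ, 0 < z → z < 1 →
      HasSum (fun n : ℕ => coeff n (expectedEnd f g) * z ^ n)
        ((z - 1 + (1 + z) * Real.sqrt (1 - z)) / (2 * (1 - z) ^ 2)) :=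
  expectedEnd_eval_symmetric_general α β hβ f g fQ hf hf1 hf0 hfQ hg hg0 hsupp hhalf
end
end

section
/- For each real z with 0 < z < 1 there is a unique real v = φ(z) with 0 < v < 1 satisfying v = z·(α+βv)·(β+αv), and lim_{z→1⁻} (1 − φ(z))/√(1−z) = 1/√(αβ). -/
/-! With `s = αβ` and `α + β = 1` the equation reads `(1 - z) v = s z (1 - v)²`. As a quadratic
in `v` its two roots have product `1`, so at most one of them lies in `(0, 1)`, and the
intermediate value theorem provides one. In terms of `r = (1 - v) / √(1 - z)` it becomes
`s z r² + √(1 - z) r = 1`, whose nonnegative root `2 / (√(1 - z) + √(1 - z + 4 s z))` is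
continuous at `z = 1` with value `1 / √s`. -/

open Filter Set Topology

theorem eq_two_div_add_sqrt_of_mul_sq_add_mul_eq_one {p c r : ℝ} (hp : 0 ≤ p) (hc : 0 ≤ c)
    (hr : 0 ≤ r) (h : p * r ^ 2 + c * r = 1) : r = 2 / (c + √(c ^ 2 + 4 * p)) := by
  have hsqrt : √(c ^ 2 + 4 * p) = 2 * p * r + c := by
    rw [Real.sqrt_eq_iff_mul_self_eq (by positivity) (by positivity)]
    linear_combination (-4 * p) * h
  have hmul : r * (c + √(c ^ 2 + 4 * p)) = 2 := by
    rw [hsqrt]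
    linear_combination 2 * h
  have hne : c + √(c ^ 2 + 4 * p) ≠ 0 := by
    rintro hzero
    rw [hzero, mul_zero] at hmul
    norm_num at hmul
  rw [eq_div_iff hne, hmul]

section FixedPoint

variable {α β z : ℝ}

theorem fixed_point_unique (hα : 0 < α) (hβ : 0 < β) (hz : 0 < z) {v w : ℝ}
    (hv : v ∈ Ioo 0 1) (hw : w ∈ Ioo 0 1)
    (hv_eq : v = z * (α + β * v) * (β + α * v)) (hw_eq : w = z * (α + β * w) * (β + α * w)) :
    v = w := by
  have hprod : (z * (α * β)) * ((v - w) * (v * w - 1)) = 0 := by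
    linear_combination v * hw_eq - w * hv_eq
  have hvw : v * w - 1 ≠ 0 := by nlinarith [hv.1, hv.2, hw.1, hw.2]
  have hzαβ : z * (α * β) ≠ 0 := by positivity
  simpa [hzαβ, hvw, sub_eq_zero] using hprod

theorem exists_fixed_point (hα : 0 < α) (hβ : 0 < β) (hαβ : α + β = 1) (hz0 : 0 < z)
    (hz1 : z < 1) : ∃ v ∈ Ioo 0 1, v = z * (α + β * v) * (β + α * v) := by
  set f : ℝ → ℝ := fun v => z * (α + β * v) * (β + α * v) - v
  have hf : ContinuousOn f (Icc 0 1) := by fun_prop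
  have hf0 : 0 < f 0 := by simp only [f]; nlinarith [mul_pos hz0 (mul_pos hα hβ)]
  have hf1 : f 1 < 0 := by
    simp only [f, mul_one, add_comm β α, hαβ]
    linarith
  obtain ⟨v, hv, hfv⟩ := intermediate_value_Ioo' zero_le_one hf ⟨hf1, hf0⟩
  exact ⟨v, hv, by linarith [hfv]⟩

theorem one_sub_mul_eq_mul_one_sub_sq (hαβ : α + β = 1) {v : ℝ}
    (hv_eq : v = z * (α + β * v) * (β + α * v)) :
    (1 - z) * v = z * (α * β) * (1 - v) ^ 2 := by
  obtain rfl : β = 1 - α := by linarith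
  linear_combination hv_eq

theorem one_sub_div_sqrt_one_sub_eq (hα : 0 ≤ α) (hβ : 0 ≤ β) (hαβ : α + β = 1) (hz0 : 0 ≤ z)
    (hz1 : z < 1) {v : ℝ} (hv : v ≤ 1) (hv_eq : v = z * (α + β * v) * (β + α * v)) :
    (1 - v) / √(1 - z) = 2 / (√(1 - z) + √(1 - z + 4 * (z * (α * β)))) := by
  have hc : 0 < √(1 - z) := Real.sqrt_pos.mpr (by linarith)
  have hc2 : √(1 - z) ^ 2 = 1 - z := Real.sq_sqrt (by linarith)
  have hquad : z * (α * β) * ((1 - v) / √(1 - z)) ^ 2 + √(1 - z) * ((1 - v) / √(1 - z)) = 1 := by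
    have hkey := one_sub_mul_eq_mul_one_sub_sq hαβ hv_eq
    field_simp
    linear_combination -v * hc2 - hkey
  rw [eq_two_div_add_sqrt_of_mul_sq_add_mul_eq_one (by positivity) hc.le
    (div_nonneg (by linarith) hc.le) hquad, hc2]

end FixedPoint

theorem tendsto_two_div_sqrt_add_sqrt {s : ℝ} (hs : 0 < s) :
    Tendsto (fun z : ℝ => 2 / (√(1 - z) + √(1 - z + 4 * (z * s)))) (𝓝 1) (𝓝 (1 / √s)) := by
  have hlim : √(1 - 1) + √(1 - 1 + 4 * (1 * s)) = 2 * √s := by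
    rw [sub_self, Real.sqrt_zero, zero_add, zero_add, one_mul,
      show (4 : ℝ) * s = 2 ^ 2 * s by norm_num, Real.sqrt_mul (by norm_num),
      Real.sqrt_sq zero_le_two]
  have hcont : ContinuousAt (fun z : ℝ => 2 / (√(1 - z) + √(1 - z + 4 * (z * s)))) 1 := by
    refine ContinuousAt.div (by fun_prop) (by fun_prop) ?_
    rw [hlim]
    positivity
  convert hcont.tendsto using 2
  rw [hlim]
  field_simp

/-- For each `0 < z < 1` there is a unique `0 < v < 1` with `v = z(α+βv)(β+αv)`, and the
function `φ` so defined satisfies `(1-φ(z))/√(1-z) → 1/√(αβ)` as `z → 1⁻`. -/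
theorem unique_fixed_point_and_limit (α β : ℝ) (hα0 : 0 < α) (hα1 : α < 1)
    (hβ : β = 1 - α) :
    (∀ z : ℝ, 0 < z → z < 1 →
      ∃! v : ℝ, 0 < v ∧ v < 1 ∧ v = z * (α + β * v) * (β + α * v)) ∧
    (∀ φ : ℝ → ℝ,
      (∀ z : ℝ, 0 < z → z < 1 →
        0 < φ z ∧ φ z < 1 ∧ φ z = z * (α + β * φ z) * (β + α * φ z)) →
      Tendsto (fun z : ℝ => (1 - φ z) / Real.sqrt (1 - z))
        (nhdsWithin 1 (Set.Ioo 0 1)) (nhds (1 / Real.sqrt (α * β)))) := by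
  have hβ0 : 0 < β := by linarith
  have hαβ : α + β = 1 := by linarith
  refine ⟨fun z hz0 hz1 => ?_, fun φ hφ => ?_⟩
  · obtain ⟨v, hv, hv_eq⟩ := exists_fixed_point hα0 hβ0 hαβ hz0 hz1
    exact ⟨v, ⟨hv.1, hv.2, hv_eq⟩, fun w ⟨hw0, hw1, hw_eq⟩ =>
      fixed_point_unique hα0 hβ0 hz0 ⟨hw0, hw1⟩ hv hw_eq hv_eq⟩
  · refine ((tendsto_two_div_sqrt_add_sqrt (mul_pos hα0 hβ0)).mono_left
      nhdsWithin_le_nhds).congr' ?_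
    filter_upwards [self_mem_nhdsWithin] with z ⟨hz0, hz1⟩
    obtain ⟨-, hφ1, hφ_eq⟩ := hφ z hz0 hz1
    exact (one_sub_div_sqrt_one_sub_eq hα0.le hβ0.le hαβ hz0.le hz1 hφ1.le hφ_eq).symm
end

section
/- There exists exactly one family of formal power series f_i, g_i (i ≥ 0), P and Q in ℝ[[z]] satisfying the one-step Knödel–Böhm–Hornik system together with the support condition. -/
/-!
Every equation of the system has the form `u = c + X • L u` with `L` linear, so the map
sending a family to the right-hand sides gains one power of `X` on differences: it is a
contraction for the `X`-adic metric. Hence it has exactly one fixed point, the `X`-adic limit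
of its iterates from `0`. The support condition says `X ^ i ∣ f i` and `X ^ i ∣ g i`; the
right-hand sides preserve it, so it holds along the iterates and at the limit.
-/

open PowerSeries

namespace PowerSeries

variable {ι R : Type*} [CommRing R]

def IsXAdicContraction (Φ : (ι → R⟦X⟧) → ι → R⟦X⟧) : Prop :=
  ∀ n u v, (∀ i, X ^ n ∣ u i - v i) → ∀ i, X ^ (n + 1) ∣ Φ u i - Φ v i

/-- The `X`-adic limit of the iterates `Φ^[k] 0`. -/
noncomputable def iterateLimit (Φ : (ι → R⟦X⟧) → ι → R⟦X⟧) (i : ι) : R⟦X⟧ :=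
  mk fun n => coeff n ((Φ^[n + 1] 0) i)

lemma X_pow_succ_dvd_mul {q φ : R⟦X⟧} {n : ℕ} (hq : X ∣ q) (hφ : X ^ n ∣ φ) :
    X ^ (n + 1) ∣ q * φ :=
  pow_succ' (X : R⟦X⟧) n ▸ mul_dvd_mul hq hφ

lemma eq_zero_of_forall_X_pow_dvd {φ : R⟦X⟧} (h : ∀ n, X ^ n ∣ φ) : φ = 0 := by
  ext m
  exact X_pow_dvd_iff.1 (h (m + 1)) m m.lt_succ_self

namespace IsXAdicContraction

variable {Φ : (ι → R⟦X⟧) → ι → R⟦X⟧} (hΦ : IsXAdicContraction Φ)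
include hΦ

lemma X_pow_dvd_iterate_sub {k l : ℕ} (hkl : k ≤ l) (i : ι) :
    X ^ k ∣ (Φ^[k] 0) i - (Φ^[l] 0) i := by
  induction k generalizing l i with
  | zero => simp
  | succ k ih =>
    obtain ⟨l, rfl⟩ : ∃ l', l = l' + 1 := ⟨l - 1, by omega⟩
    rw [Function.iterate_succ_apply', Function.iterate_succ_apply']
    exact hΦ k _ _ (ih (by omega)) i

lemma X_pow_dvd_iterateLimit_sub (k : ℕ) (i : ι) :
    X ^ k ∣ iterateLimit Φ i - (Φ^[k] 0) i := by
  refine X_pow_dvd_iff.2 fun m hm => ?_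
  rw [map_sub, iterateLimit, coeff_mk, sub_eq_zero, ← sub_eq_zero, ← map_sub]
  exact X_pow_dvd_iff.1 (hΦ.X_pow_dvd_iterate_sub hm i) m m.lt_succ_self

lemma isFixedPt_iterateLimit : Function.IsFixedPt Φ (iterateLimit Φ) := by
  funext i
  ext n
  have h := X_pow_dvd_iff.1 (hΦ n _ _ (hΦ.X_pow_dvd_iterateLimit_sub n) i) n n.lt_succ_self
  rw [map_sub, sub_eq_zero, ← Function.iterate_succ_apply' Φ n] at h
  rw [h, iterateLimit, coeff_mk]

lemma eq_of_isFixedPt {u v : ι → R⟦X⟧} (hu : Function.IsFixedPt Φ u)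
    (hv : Function.IsFixedPt Φ v) : u = v := by
  have h : ∀ n i, X ^ n ∣ u i - v i := by
    intro n
    induction n with
    | zero => simp
    | succ n ih => rw [← hu, ← hv]; exact hΦ n u v ih
  funext i
  exact sub_eq_zero.1 (eq_zero_of_forall_X_pow_dvd fun n => h n i)

lemma X_pow_dvd_iterateLimit (s : ι → ℕ)
    (hs : ∀ u, (∀ i, X ^ s i ∣ u i) → ∀ i, X ^ s i ∣ Φ u i) (i : ι) :
    X ^ s i ∣ iterateLimit Φ i := by
  have hiter : ∀ k i, X ^ s i ∣ (Φ^[k] 0) i := by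
    intro k
    induction k with
    | zero => simp
    | succ k ih => rw [Function.iterate_succ_apply']; exact hs _ ih
  simpa using dvd_add (hΦ.X_pow_dvd_iterateLimit_sub (s i) i) (hiter (s i) i)

end IsXAdicContraction

end PowerSeries

namespace KBH

variable {R : Type*} [CommRing R]

/-- `rhs α β 1 f g` and `rhs β α 0 g f` are the right-hand sides of the equations for `f`
and for `g`. -/
noncomputable def rhs (a b : R) (c : R⟦X⟧) (u v : ℕ → R⟦X⟧) : ℕ → R⟦X⟧
  | 0 => c + C (b ^ 2) * X ^ 2 * u 0 + C a * X * u 1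
  | 1 => C a * X * u 0 + C b * X * u 2 + C (a * b) * X ^ 2 * v 0
  | i + 2 => if Even i then C b * X * u (i + 1) + C a * X * u (i + 3)
      else C a * X * u (i + 1) + C b * X * u (i + 3)

lemma rhs_sub_rhs (a b : R) (c : R⟦X⟧) (u v u' v' : ℕ → R⟦X⟧) (i : ℕ) :
    rhs a b c u v i - rhs a b c u' v' i =
      rhs a b 0 (fun j => u j - u' j) (fun j => v j - v' j) i := by
  rcases i with _ | _ | i <;> simp only [rhs] <;> (try split_ifs) <;> ring

lemma X_pow_succ_dvd_rhs_zero (a b : R) {n : ℕ} {u v : ℕ → R⟦X⟧}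
    (hu : ∀ j, X ^ n ∣ u j) (hv : ∀ j, X ^ n ∣ v j) (i : ℕ) :
    X ^ (n + 1) ∣ rhs a b 0 u v i := by
  have hX (a : R) : X ∣ C a * X := dvd_mul_left _ _
  have hX2 (a : R) : X ∣ C a * X ^ 2 := dvd_mul_of_dvd_right (dvd_pow_self X two_ne_zero) _
  rcases i with _ | _ | i <;> simp only [rhs, zero_add] <;> (try split_ifs) <;>
    repeat' first
      | apply dvd_add
      | exact X_pow_succ_dvd_mul (hX _) (hu _)
      | exact X_pow_succ_dvd_mul (hX2 _) (hu _)
      | exact X_pow_succ_dvd_mul (hX2 _) (hv _)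

lemma X_pow_dvd_rhs (a b : R) (c : R⟦X⟧) {u : ℕ → R⟦X⟧} (hu : ∀ j, X ^ j ∣ u j)
    (v : ℕ → R⟦X⟧) (i : ℕ) : X ^ i ∣ rhs a b c u v i := by
  have hX (a : R) : X ∣ C a * X := dvd_mul_left _ _
  have hX2 (a : R) : X ∣ C a * X ^ 2 := dvd_mul_of_dvd_right (dvd_pow_self X two_ne_zero) _
  rcases i with _ | _ | i
  · simp
  · simp only [rhs, zero_add, pow_one]
    exact dvd_add (dvd_add ((hX a).mul_right _) ((hX b).mul_right _)) ((hX2 _).mul_right _)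
  · have hu' (a : R) : X ^ (i + 2) ∣ C a * X * u (i + 3) :=
      X_pow_succ_dvd_mul (hX a) ((pow_dvd_pow X (by omega)).trans (hu (i + 3)))
    simp only [rhs]
    split_ifs <;> exact dvd_add (X_pow_succ_dvd_mul (hX _) (hu _)) (hu' _)

lemma rhs_eq_iff (a b : R) (c : R⟦X⟧) (u v : ℕ → R⟦X⟧) :
    u = rhs a b c u v ↔
      (∀ k : ℕ, u (2 * k + 2) = C b * X * u (2 * k + 1) + C a * X * u (2 * k + 3)) ∧
      (∀ k : ℕ, u (2 * k + 3) = C a * X * u (2 * k + 2) + C b * X * u (2 * k + 4)) ∧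
      u 1 = C a * X * u 0 + C b * X * u 2 + C (a * b) * X ^ 2 * v 0 ∧
      u 0 = c + C (b ^ 2) * X ^ 2 * u 0 + C a * X * u 1 := by
  constructor
  · intro h
    refine ⟨fun k => ?_, fun k => ?_, congrFun h 1, congrFun h 0⟩
    · rw [congrFun h (2 * k + 2)]; simp [rhs]
    · rw [congrFun h (2 * k + 3)]; simp [rhs]
  · rintro ⟨heven, hodd, h1, h0⟩
    funext i
    rcases i with _ | _ | i
    · exact h0
    · exact h1
    · obtain ⟨k, rfl | rfl⟩ := Nat.even_or_odd' i
      · simpa [rhs] using heven k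
      · simpa [rhs] using hodd k

noncomputable def kbhMap (α β : R) (u : ℕ ⊕ ℕ → R⟦X⟧) : ℕ ⊕ ℕ → R⟦X⟧ :=
  Sum.elim (rhs α β 1 (u ∘ .inl) (u ∘ .inr)) (rhs β α 0 (u ∘ .inr) (u ∘ .inl))

variable (α β : R)

lemma isXAdicContraction_kbhMap : IsXAdicContraction (kbhMap α β) := by
  rintro n u v h (i | i) <;>
    simp only [kbhMap, Sum.elim_inl, Sum.elim_inr, rhs_sub_rhs] <;>
    exact X_pow_succ_dvd_rhs_zero _ _ (fun j => h _) (fun j => h _) i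

lemma X_pow_dvd_kbhMap (u : ℕ ⊕ ℕ → R⟦X⟧) (hu : ∀ i, X ^ Sum.elim id id i ∣ u i) :
    ∀ i, X ^ Sum.elim id id i ∣ kbhMap α β u i := by
  rintro (i | i) <;> exact X_pow_dvd_rhs _ _ _ (fun j => hu _) _ i

lemma isFixedPt_kbhMap_iff (f g : ℕ → R⟦X⟧) :
    Function.IsFixedPt (kbhMap α β) (Sum.elim f g) ↔
      (∀ k : ℕ, f (2 * k + 2) = C β * X * f (2 * k + 1) + C α * X * f (2 * k + 3)) ∧
      (∀ k : ℕ, f (2 * k + 3) = C α * X * f (2 * k + 2) + C β * X * f (2 * k + 4)) ∧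
      (f 1 = C α * X * f 0 + C β * X * f 2 + C (α * β) * X ^ 2 * g 0) ∧
      (f 0 = 1 + C (β ^ 2) * X ^ 2 * f 0 + C α * X * f 1) ∧
      (∀ k : ℕ, g (2 * k + 2) = C α * X * g (2 * k + 1) + C β * X * g (2 * k + 3)) ∧
      (∀ k : ℕ, g (2 * k + 3) = C β * X * g (2 * k + 2) + C α * X * g (2 * k + 4)) ∧
      (g 1 = C β * X * g 0 + C α * X * g 2 + C (α * β) * X ^ 2 * f 0) ∧
      (g 0 = C (α ^ 2) * X ^ 2 * g 0 + C β * X * g 1) := by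
  rw [Function.IsFixedPt, kbhMap, Sum.elim_comp_inl, Sum.elim_comp_inr, Sum.elim_eq_iff,
    eq_comm, rhs_eq_iff, eq_comm (a := rhs _ _ _ g f), rhs_eq_iff, zero_add, mul_comm β α]
  simp only [and_assoc]

end KBH

open KBH in
theorem oneStep_system_existsUnique_general (α β : ℝ) :
    ∃! p : (ℕ → PowerSeries ℝ) × (ℕ → PowerSeries ℝ) × PowerSeries ℝ × PowerSeries ℝ,
      (∀ k : ℕ, p.1 (2 * k + 2) = C β * X * p.1 (2 * k + 1) + C α * X * p.1 (2 * k + 3)) ∧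
      (∀ k : ℕ, p.1 (2 * k + 3) = C α * X * p.1 (2 * k + 2) + C β * X * p.1 (2 * k + 4)) ∧
      (p.1 1 = C α * X * p.1 0 + C β * X * p.1 2 + C (α * β) * X ^ 2 * p.2.1 0) ∧
      (p.1 0 = 1 + C (β ^ 2) * X ^ 2 * p.1 0 + C α * X * p.1 1) ∧
      (p.2.2.1 = C β * X * p.1 0) ∧
      (∀ k : ℕ, p.2.1 (2 * k + 2) =
        C α * X * p.2.1 (2 * k + 1) + C β * X * p.2.1 (2 * k + 3)) ∧
      (∀ k : ℕ, p.2.1 (2 * k + 3) =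
        C β * X * p.2.1 (2 * k + 2) + C α * X * p.2.1 (2 * k + 4)) ∧
      (p.2.1 1 = C β * X * p.2.1 0 + C α * X * p.2.1 2 + C (α * β) * X ^ 2 * p.1 0) ∧
      (p.2.1 0 = C (α ^ 2) * X ^ 2 * p.2.1 0 + C β * X * p.2.1 1) ∧
      (p.2.2.2 = C α * X * p.2.1 0) ∧
      (∀ n i : ℕ, n < i → coeff n (p.1 i) = 0 ∧ coeff n (p.2.1 i) = 0) := by
  have hΦ := isXAdicContraction_kbhMap α β
  have hfix := hΦ.isFixedPt_iterateLimit
  have hsupp := hΦ.X_pow_dvd_iterateLimit _ (X_pow_dvd_kbhMap α β)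
  generalize iterateLimit (kbhMap α β) = u at hfix hsupp
  refine ⟨(u ∘ .inl, u ∘ .inr, C β * X * u (.inl 0), C α * X * u (.inr 0)), ?_, ?_⟩
  · rw [← Sum.elim_comp_inl_inr u, isFixedPt_kbhMap_iff] at hfix
    obtain ⟨hf₁, hf₂, hf₃, hf₄, hg₁, hg₂, hg₃, hg₄⟩ := hfix
    exact ⟨hf₁, hf₂, hf₃, hf₄, rfl, hg₁, hg₂, hg₃, hg₄, rfl, fun n i hni =>
      ⟨X_pow_dvd_iff.1 (hsupp (.inl i)) n hni, X_pow_dvd_iff.1 (hsupp (.inr i)) n hni⟩⟩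
  · rintro ⟨f, g, P, Q⟩ ⟨hf₁, hf₂, hf₃, hf₄, hP, hg₁, hg₂, hg₃, hg₄, hQ, -⟩
    have hfg : Sum.elim f g = u := hΦ.eq_of_isFixedPt
      ((isFixedPt_kbhMap_iff α β f g).2 ⟨hf₁, hf₂, hf₃, hf₄, hg₁, hg₂, hg₃, hg₄⟩) hfix
    dsimp only at hP hQ
    rw [hP, hQ, ← hfg]
    rfl

/-- Existence and uniqueness of the solution of the one-step Knödel–Böhm–Hornik system
together with the support condition. -/
theorem oneStep_system_existsUnique (α β : ℝ) (hα0 : 0 < α) (hα1 : α < 1)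
    (hβ : β = 1 - α) :
    ∃! p : (ℕ → PowerSeries ℝ) × (ℕ → PowerSeries ℝ) × PowerSeries ℝ × PowerSeries ℝ,
      (∀ k : ℕ, p.1 (2 * k + 2) = C β * X * p.1 (2 * k + 1) + C α * X * p.1 (2 * k + 3)) ∧
      (∀ k : ℕ, p.1 (2 * k + 3) = C α * X * p.1 (2 * k + 2) + C β * X * p.1 (2 * k + 4)) ∧
      (p.1 1 = C α * X * p.1 0 + C β * X * p.1 2 + C (α * β) * X ^ 2 * p.2.1 0) ∧
      (p.1 0 = 1 + C (β ^ 2) * X ^ 2 * p.1 0 + C α * X * p.1 1) ∧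
      (p.2.2.1 = C β * X * p.1 0) ∧
      (∀ k : ℕ, p.2.1 (2 * k + 2) =
        C α * X * p.2.1 (2 * k + 1) + C β * X * p.2.1 (2 * k + 3)) ∧
      (∀ k : ℕ, p.2.1 (2 * k + 3) =
        C β * X * p.2.1 (2 * k + 2) + C α * X * p.2.1 (2 * k + 4)) ∧
      (p.2.1 1 = C β * X * p.2.1 0 + C α * X * p.2.1 2 + C (α * β) * X ^ 2 * p.1 0) ∧
      (p.2.1 0 = C (α ^ 2) * X ^ 2 * p.2.1 0 + C β * X * p.2.1 1) ∧
      (p.2.2.2 = C α * X * p.2.1 0) ∧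
      (∀ n i : ℕ, n < i → coeff n (p.1 i) = 0 ∧ coeff n (p.2.1 i) = 0) :=
  oneStep_system_existsUnique_general α β
end
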